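/- arXiv:1602.04014 — 7 statements merged into one kernel-verified Lean document; each statement's English description precedes it below -/
import Mathlib

section
/- Let X be a complex Banach space with open unit ball B. Then for every x ∈ B, K_B(0, x) = ω(0, ‖x‖) = tanh⁻¹(‖x‖), where K_B is the Kobayashi pseudo-metric on B and ω is the Poincaré metric on the unit disc. -/
open Metric

/-- Inverse hyperbolic tangent, `tanh⁻¹ t`. -/
noncomputable def artanh (t : ℝ) : ℝ := Real.log ((1 + t) / (1 - t)) / 2

/-- The Poincaré distance on the open unit disc in `ℂ`. -/
noncomputable def poincare (a b : ℂ) : ℝ :=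
  artanh (‖a - b‖ / ‖1 - (starRingEnd ℂ) a * b‖)

/-- An analytic chain joining `x` and `y` in the open unit ball of a complex normed space `X`:
points `z i`, `w i` of the unit disc and holomorphic maps `f i` from the unit disc into the
unit ball with `f 0 (z 0) = x`, `f i (w i) = f (i+1) (z (i+1))`, `f (n-1) (w (n-1)) = y`. -/
structure AnalyticChain (X : Type*) [NormedAddCommGroup X] [NormedSpace ℂ X]
    (x y : X) : Type _ where
  n : ℕ
  npos : 0 < n
  z : ℕ → ℂ
  w : ℕ → ℂ
  hz : ∀ i < n, ‖z i‖ < 1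
  hw : ∀ i < n, ‖w i‖ < 1
  f : ℕ → ℂ → X
  holo : ∀ i < n, DifferentiableOn ℂ (f i) (ball (0 : ℂ) 1)
  maps : ∀ i < n, ∀ ζ ∈ ball (0 : ℂ) 1, f i ζ ∈ ball (0 : X) 1
  first : f 0 (z 0) = x
  last : f (n - 1) (w (n - 1)) = y
  link : ∀ i, i + 1 < n → f i (w i) = f (i + 1) (z (i + 1))

/-- The total Poincaré length of an analytic chain. -/
noncomputable def AnalyticChain.length {X : Type*} [NormedAddCommGroup X] [NormedSpace ℂ X]
    {x y : X} (c : AnalyticChain X x y) : ℝ :=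
  ∑ i ∈ Finset.range c.n, poincare (c.z i) (c.w i)

/-- The Kobayashi pseudo-metric on the open unit ball of `X`: the infimum of the lengths of
analytic chains joining `x` and `y`. -/
noncomputable def kobayashi (X : Type*) [NormedAddCommGroup X] [NormedSpace ℂ X]
    (x y : X) : ℝ :=
  sInf {r : ℝ | ∃ c : AnalyticChain X x y, c.length = r}


/-!
A continuous functional `ℓ` of norm `≤ 1` with `ℓ x = ‖x‖` (Hahn–Banach) maps every analytic
chain from `0` to `x` to an analytic chain in the disc from `0` to `‖x‖` of the same length. By
the Schwarz–Pick lemma each link of that chain moves the value of `artanh ‖·‖` by at most its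
Poincaré length, so every chain has length at least `artanh ‖x‖`. The single holomorphic disc
`ζ ↦ ζ • x / ‖x‖` attains this bound.
-/

open scoped ComplexConjugate

@[simp]
theorem artanh_zero : artanh 0 = 0 := by simp [artanh]

theorem artanh_eq_real_artanh {t : ℝ} (ht : t ∈ Set.Icc (-1) 1) :
    artanh t = Real.artanh t := by
  rw [Real.artanh_eq_half_log ht, artanh]
  ring

theorem artanh_le_artanh {s t : ℝ} (hs : -1 < s) (ht : t < 1) (hst : s ≤ t) :
    artanh s ≤ artanh t := by
  rw [artanh_eq_real_artanh ⟨hs.le, hst.trans ht.le⟩,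
    artanh_eq_real_artanh ⟨hs.le.trans hst, ht.le⟩]
  exact Real.artanh_le_artanh hs ht hst

theorem artanh_add {r s : ℝ} (hr : r ∈ Set.Ioo (-1) 1) (hs : s ∈ Set.Ioo (-1) 1) :
    artanh ((r + s) / (1 + r * s)) = artanh r + artanh s := by
  obtain ⟨hr₁, hr₂⟩ := hr
  obtain ⟨hs₁, hs₂⟩ := hs
  have hrs : 0 < 1 + r * s := by nlinarith
  have hden : 1 - (r + s) / (1 + r * s) ≠ 0 := by
    rw [one_sub_div hrs.ne']
    exact div_ne_zero (by nlinarith) hrs.ne'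
  have hprod : (1 + (r + s) / (1 + r * s)) / (1 - (r + s) / (1 + r * s))
      = (1 + r) / (1 - r) * ((1 + s) / (1 - s)) := by
    rw [div_mul_div_comm, div_eq_div_iff hden (by nlinarith)]
    field_simp
    ring
  rw [artanh, artanh, artanh, hprod,
    Real.log_mul (div_pos (by linarith) (by linarith)).ne' (div_pos (by linarith) (by linarith)).ne']
  ring

section Mobius

/-- The involutive automorphism of the unit disc exchanging `a` and `0`. -/
noncomputable def mobius (a ζ : ℂ) : ℂ := (a - ζ) / (1 - conj a * ζ)

variable {a b ζ : ℂ}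

theorem sq_norm_one_sub_conj_mul_sub_sq_norm (a b : ℂ) :
    ‖1 - conj a * b‖ ^ 2 - ‖a - b‖ ^ 2 = (1 - ‖a‖ ^ 2) * (1 - ‖b‖ ^ 2) := by
  simp only [Complex.sq_norm, Complex.normSq_apply, Complex.sub_re, Complex.sub_im,
    Complex.mul_re, Complex.mul_im, Complex.one_re, Complex.one_im, Complex.conj_re,
    Complex.conj_im]
  ring

theorem norm_one_sub_conj_mul_pos (ha : ‖a‖ < 1) (hb : ‖b‖ < 1) :
    0 < ‖1 - conj a * b‖ := by
  have hab : ‖conj a * b‖ < 1 := by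
    rw [norm_mul, Complex.norm_conj]
    nlinarith [norm_nonneg a, norm_nonneg b]
  have := norm_sub_norm_le (1 : ℂ) (conj a * b)
  rw [norm_one] at this
  linarith

theorem one_sub_conj_mul_ne_zero (ha : ‖a‖ < 1) (hb : ‖b‖ < 1) : 1 - conj a * b ≠ 0 :=
  norm_pos_iff.mp (norm_one_sub_conj_mul_pos ha hb)

theorem norm_mobius_lt_one (ha : ‖a‖ < 1) (hb : ‖b‖ < 1) : ‖mobius a b‖ < 1 := by
  have hsq : ‖a - b‖ ^ 2 < ‖1 - conj a * b‖ ^ 2 := by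
    have := sq_norm_one_sub_conj_mul_sub_sq_norm a b
    have : 0 < (1 - ‖a‖ ^ 2) * (1 - ‖b‖ ^ 2) := by
      apply mul_pos <;> nlinarith [norm_nonneg a, norm_nonneg b]
    linarith
  rw [mobius, norm_div, div_lt_one (norm_one_sub_conj_mul_pos ha hb)]
  exact lt_of_pow_lt_pow_left₀ 2 (norm_nonneg _) hsq

theorem norm_mobius_comm (a b : ℂ) : ‖mobius a b‖ = ‖mobius b a‖ := by
  have hden : 1 - conj b * a = conj (1 - conj a * b) := by
    simp only [map_sub, map_mul, map_one, Complex.conj_conj]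
    ring
  rw [mobius, mobius, norm_div, norm_div, norm_sub_rev, hden, Complex.norm_conj]

@[simp]
theorem mobius_self (a : ℂ) : mobius a a = 0 := by simp [mobius]

@[simp]
theorem mobius_zero (a : ℂ) : mobius a 0 = a := by simp [mobius]

theorem mobius_mobius (ha : ‖a‖ < 1) (hζ : ‖ζ‖ < 1) : mobius a (mobius a ζ) = ζ := by
  rw [mobius, div_eq_iff (one_sub_conj_mul_ne_zero ha (norm_mobius_lt_one ha hζ)), mobius,
    div_eq_mul_inv]
  linear_combination (ζ - a) * mul_inv_cancel₀ (one_sub_conj_mul_ne_zero ha hζ)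

theorem norm_mobius_le (ha : ‖a‖ < 1) (hb : ‖b‖ < 1) :
    ‖mobius a b‖ ≤ (‖a‖ + ‖b‖) / (1 + ‖a‖ * ‖b‖) := by
  have hD := norm_one_sub_conj_mul_pos ha hb
  have hDle : ‖1 - conj a * b‖ ≤ 1 + ‖a‖ * ‖b‖ :=
    (norm_sub_le _ _).trans (by rw [norm_one, norm_mul, Complex.norm_conj])
  have hP : 0 ≤ (1 - ‖a‖ ^ 2) * (1 - ‖b‖ ^ 2) := by
    apply mul_nonneg <;> nlinarith [norm_nonneg a, norm_nonneg b]
  have hid := sq_norm_one_sub_conj_mul_sub_sq_norm a b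
  rw [mobius, norm_div, div_le_div_iff₀ hD (by positivity)]
  -- with `D = ‖1 - conj a * b‖`, the squared claim reduces via `hid` to `D ≤ 1 + ‖a‖ * ‖b‖`
  refine le_of_pow_le_pow_left₀ two_ne_zero (by positivity) ?_
  nlinarith [mul_le_mul_of_nonneg_left (pow_le_pow_left₀ hD.le hDle 2) hP]

theorem differentiableOn_mobius (ha : ‖a‖ < 1) :
    DifferentiableOn ℂ (mobius a) (ball 0 1) :=
  DifferentiableOn.div (by fun_prop) (by fun_prop) fun ζ hζ ↦
    one_sub_conj_mul_ne_zero ha (mem_ball_zero_iff.mp hζ)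

theorem mapsTo_mobius (ha : ‖a‖ < 1) :
    Set.MapsTo (mobius a) (ball 0 1) (ball 0 1) := fun _ hζ ↦
  mem_ball_zero_iff.mpr (norm_mobius_lt_one ha (mem_ball_zero_iff.mp hζ))

/-- **Schwarz–Pick lemma**. -/
theorem norm_mobius_apply_le {f : ℂ → ℂ} (hf : DifferentiableOn ℂ f (ball 0 1))
    (hmaps : Set.MapsTo f (ball 0 1) (ball 0 1)) {z w : ℂ}
    (hz : ‖z‖ < 1) (hw : ‖w‖ < 1) :
    ‖mobius (f w) (f z)‖ ≤ ‖mobius w z‖ := by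
  have hfw : ‖f w‖ < 1 := mem_ball_zero_iff.mp (hmaps (mem_ball_zero_iff.mpr hw))
  -- conjugating `f` by the Möbius maps of `w` and `f w` gives a self-map of the disc fixing `0`
  set g : ℂ → ℂ := fun ζ ↦ mobius (f w) (f (mobius w ζ))
  have hg : DifferentiableOn ℂ g (ball 0 1) :=
    (differentiableOn_mobius hfw).comp (hf.comp (differentiableOn_mobius hw) (mapsTo_mobius hw))
      (hmaps.comp (mapsTo_mobius hw))
  have hgmaps : Set.MapsTo g (ball 0 1) (ball 0 1) :=
    (mapsTo_mobius hfw).comp (hmaps.comp (mapsTo_mobius hw))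
  have hg0 : g 0 = 0 := by simp [g]
  have hgz : g (mobius w z) = mobius (f w) (f z) := by simp [g, mobius_mobius hw hz]
  rw [← hgz]
  exact Complex.norm_le_norm_of_mapsTo_ball hg
    (hgmaps.mono_right ball_subset_closedBall) hg0 (norm_mobius_lt_one hw hz)

end Mobius

theorem poincare_eq_artanh_norm_mobius (a b : ℂ) : poincare a b = artanh ‖mobius a b‖ := by
  rw [poincare, mobius, norm_div]

@[simp]
theorem poincare_zero_left (b : ℂ) : poincare 0 b = artanh ‖b‖ := by simp [poincare]

theorem poincare_apply_le {f : ℂ → ℂ} (hf : DifferentiableOn ℂ f (ball 0 1))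
    (hmaps : Set.MapsTo f (ball 0 1) (ball 0 1)) {z w : ℂ}
    (hz : ‖z‖ < 1) (hw : ‖w‖ < 1) :
    poincare (f z) (f w) ≤ poincare z w := by
  rw [poincare_eq_artanh_norm_mobius, poincare_eq_artanh_norm_mobius, norm_mobius_comm,
    norm_mobius_comm z]
  exact artanh_le_artanh (by linarith [norm_nonneg (mobius (f w) (f z))])
    (norm_mobius_lt_one hw hz) (norm_mobius_apply_le hf hmaps hz hw)

theorem artanh_norm_le_artanh_norm_add_poincare {b c : ℂ} (hb : ‖b‖ < 1) (hc : ‖c‖ < 1) :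
    artanh ‖c‖ ≤ artanh ‖b‖ + poincare b c := by
  set d := mobius b c
  have hd : ‖d‖ < 1 := norm_mobius_lt_one hb hc
  have hcd : ‖c‖ ≤ (‖b‖ + ‖d‖) / (1 + ‖b‖ * ‖d‖) := by
    simpa only [d, mobius_mobius hb hc] using norm_mobius_le hb hd
  have hlt : (‖b‖ + ‖d‖) / (1 + ‖b‖ * ‖d‖) < 1 := by
    rw [div_lt_one (by positivity)]
    nlinarith [norm_nonneg b, norm_nonneg d]
  calc artanh ‖c‖ ≤ artanh ((‖b‖ + ‖d‖) / (1 + ‖b‖ * ‖d‖)) :=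
        artanh_le_artanh (by linarith [norm_nonneg c]) hlt hcd
    _ = artanh ‖b‖ + artanh ‖d‖ :=
        artanh_add ⟨by linarith [norm_nonneg b], hb⟩ ⟨by linarith [norm_nonneg d], hd⟩
    _ = artanh ‖b‖ + poincare b c := by rw [poincare_eq_artanh_norm_mobius]

namespace AnalyticChain

variable {X Y : Type*} [NormedAddCommGroup X] [NormedSpace ℂ X]
  [NormedAddCommGroup Y] [NormedSpace ℂ Y]

def map {x y : X} (c : AnalyticChain X x y) (ℓ : X →L[ℂ] Y) (hℓ : ‖ℓ‖ ≤ 1) :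
    AnalyticChain Y (ℓ x) (ℓ y) where
  n := c.n
  npos := c.npos
  z := c.z
  w := c.w
  hz := c.hz
  hw := c.hw
  f i := ℓ ∘ c.f i
  holo i hi := ℓ.differentiable.comp_differentiableOn (c.holo i hi)
  maps i hi ζ hζ := by
    have := c.maps i hi ζ hζ
    rw [mem_ball_zero_iff] at this ⊢
    calc ‖ℓ (c.f i ζ)‖ ≤ 1 * ‖c.f i ζ‖ := ℓ.le_of_opNorm_le hℓ _
      _ < 1 := by rwa [one_mul]
  first := congrArg ℓ c.first
  last := congrArg ℓ c.last
  link i hi := congrArg ℓ (c.link i hi)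

@[simp]
theorem length_map {x y : X} (c : AnalyticChain X x y) (ℓ : X →L[ℂ] Y) (hℓ : ‖ℓ‖ ≤ 1) :
    (c.map ℓ hℓ).length = c.length :=
  rfl

theorem artanh_norm_le_artanh_norm_add_length {a y : ℂ} (c : AnalyticChain ℂ a y) :
    artanh ‖y‖ ≤ artanh ‖a‖ + c.length := by
  have hnorm : ∀ i < c.n, ∀ ζ, ‖ζ‖ < 1 → ‖c.f i ζ‖ < 1 := fun i hi ζ hζ ↦
    mem_ball_zero_iff.mp (c.maps i hi ζ (mem_ball_zero_iff.mpr hζ))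
  have hlink : ∀ i < c.n, artanh ‖c.f i (c.w i)‖
      ≤ artanh ‖c.f i (c.z i)‖ + poincare (c.z i) (c.w i) := fun i hi ↦
    (artanh_norm_le_artanh_norm_add_poincare (hnorm i hi _ (c.hz i hi))
      (hnorm i hi _ (c.hw i hi))).trans
      (add_le_add_right (poincare_apply_le (c.holo i hi) (c.maps i hi) (c.hz i hi)
        (c.hw i hi)) _)
  have hpartial : ∀ k < c.n, artanh ‖c.f k (c.w k)‖
      ≤ artanh ‖a‖ + ∑ i ∈ Finset.range (k + 1), poincare (c.z i) (c.w i) := by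
    intro k hk
    induction k with
    | zero => simpa [c.first] using hlink 0 hk
    | succ k ih =>
      have := hlink (k + 1) hk
      rw [← c.link k hk] at this
      rw [Finset.sum_range_succ]
      linarith [ih (by omega)]
  have := hpartial (c.n - 1) (by have := c.npos; omega)
  rwa [c.last, Nat.sub_add_cancel c.npos] at this

theorem artanh_norm_le_length {x : X} (c : AnalyticChain X 0 x) : artanh ‖x‖ ≤ c.length := by
  obtain ⟨ℓ, hℓ, hℓx⟩ := exists_dual_vector'' ℂ x
  have := (c.map ℓ hℓ).artanh_norm_le_artanh_norm_add_length
  simpa [hℓx] using this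

noncomputable def radial (x : X) (hx : ‖x‖ < 1) : AnalyticChain X 0 x where
  n := 1
  npos := one_pos
  z _ := 0
  w _ := ‖x‖
  hz _ _ := by simp
  hw _ _ := by simpa using hx
  f _ ζ := ζ • (‖x‖ : ℂ)⁻¹ • x
  holo _ _ := by fun_prop
  maps _ _ ζ hζ := by
    rw [mem_ball_zero_iff] at hζ ⊢
    calc ‖ζ • (‖x‖ : ℂ)⁻¹ • x‖ = ‖ζ‖ * (‖x‖⁻¹ * ‖x‖) := by simp [norm_smul]
      _ ≤ ‖ζ‖ * 1 := by gcongr; exact inv_mul_le_one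
      _ < 1 := by rwa [mul_one]
  first := by simp
  last := by
    rcases eq_or_ne x 0 with rfl | hx0
    · simp
    · exact smul_inv_smul₀ (by simpa using hx0) x
  link _ _ := by omega

@[simp]
theorem length_radial (x : X) (hx : ‖x‖ < 1) : (radial x hx).length = artanh ‖x‖ := by
  simp [radial, length]

end AnalyticChain

theorem kobayashi_zero_eq_general
    {X : Type*} [NormedAddCommGroup X] [NormedSpace ℂ X]
    (x : X) (hx : x ∈ ball (0 : X) 1) :
    kobayashi X 0 x = poincare 0 (‖x‖ : ℂ) ∧ kobayashi X 0 x = artanh ‖x‖ := by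
  rw [mem_ball_zero_iff] at hx
  have hk : kobayashi X 0 x = artanh ‖x‖ := by
    refine IsLeast.csInf_eq ⟨⟨AnalyticChain.radial x hx, by simp⟩, ?_⟩
    rintro _ ⟨c, rfl⟩
    exact c.artanh_norm_le_length
  exact ⟨by simpa using hk, hk⟩

/-- For the open unit ball `B` of a complex Banach space `X` and any `x ∈ B`,
`K_B(0, x) = ω(0, ‖x‖) = tanh⁻¹ ‖x‖`. -/
theorem kobayashi_zero_eq
    {X : Type*} [NormedAddCommGroup X] [NormedSpace ℂ X] [CompleteSpace X]
    (x : X) (hx : x ∈ ball (0 : X) 1) :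
    kobayashi X 0 x = poincare 0 (‖x‖ : ℂ) ∧ kobayashi X 0 x = artanh ‖x‖ :=
  kobayashi_zero_eq_general x hx
end

section
/- Let H, K be complex Hilbert spaces, let A, Z be bounded operators from K to H with ‖A‖ < 1 and ‖Z‖ < 1. Then the operator identity (Z − A)(I − A*A)⁻¹(I − A*Z) = (I − ZA*)(I − AA*)⁻¹(Z − A) holds. -/
open ContinuousLinearMap

/-!
The identity is purely algebraic and holds for any operator `C : H → K` in place of `A*`.
Write `D = Z − A`. Since `1 − CZ = (1 − CA) − CD` and `1 − ZC = (1 − AC) − DC`, both sides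
reduce to `D − D (BK C) D` and `D − D (C BH) D` respectively, and these agree by the
push-through identity `(1 − CA)⁻¹ C = C (1 − AC)⁻¹`, itself a consequence of
`C (1 − AC) = (1 − CA) C`.
-/

section PushThrough

variable {R M N : Type*} [Ring R]
  [TopologicalSpace M] [AddCommGroup M] [IsTopologicalAddGroup M] [Module R M]
  [TopologicalSpace N] [AddCommGroup N] [IsTopologicalAddGroup N] [Module R N]

theorem comp_one_sub_comp_eq (A : M →L[R] N) (C : N →L[R] M) :
    C ∘L (1 - A ∘L C) = (1 - C ∘L A) ∘L C := by
  ext x; simp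

theorem comp_eq_comp_of_inverse_one_sub_comp (A : M →L[R] N) (C : N →L[R] M)
    {BM : M →L[R] M} {BN : N →L[R] N}
    (hBM : BM ∘L (1 - C ∘L A) = 1) (hBN : (1 - A ∘L C) ∘L BN = 1) :
    BM ∘L C = C ∘L BN :=
  calc BM ∘L C = BM ∘L (C ∘L ((1 - A ∘L C) ∘L BN)) := by rw [hBN, one_def, comp_id]
    _ = (BM ∘L (1 - C ∘L A)) ∘L (C ∘L BN) := by
        rw [← comp_assoc _ _ BN, comp_one_sub_comp_eq]; simp only [comp_assoc]
    _ = C ∘L BN := by rw [hBM, one_def, id_comp]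

theorem sub_comp_inverse_comp_one_sub_comp (A Z : M →L[R] N) (C : N →L[R] M)
    {BM : M →L[R] M} {BN : N →L[R] N}
    (hBM : BM ∘L (1 - C ∘L A) = 1) (hBN : (1 - A ∘L C) ∘L BN = 1) :
    (Z - A) ∘L BM ∘L (1 - C ∘L Z) = (1 - Z ∘L C) ∘L BN ∘L (Z - A) := by
  have hCZ : 1 - C ∘L Z = (1 - C ∘L A) - C ∘L (Z - A) := by rw [comp_sub]; abel
  have hZC : 1 - Z ∘L C = (1 - A ∘L C) - (Z - A) ∘L C := by rw [sub_comp]; abel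
  calc (Z - A) ∘L BM ∘L (1 - C ∘L Z)
        = (Z - A) - (Z - A) ∘L (BM ∘L C) ∘L (Z - A) := by
        rw [hCZ, comp_sub, hBM, comp_sub, one_def, comp_id, comp_assoc]
    _ = (Z - A) - (Z - A) ∘L (C ∘L BN) ∘L (Z - A) := by
        rw [comp_eq_comp_of_inverse_one_sub_comp A C hBM hBN]
    _ = (1 - Z ∘L C) ∘L BN ∘L (Z - A) := by
        conv_rhs => rw [hZC, sub_comp, ← comp_assoc, hBN, one_def, id_comp]
        simp only [comp_assoc]

end PushThrough

theorem operator_identity_general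
    {H K : Type*} [NormedAddCommGroup H] [InnerProductSpace ℂ H] [CompleteSpace H]
    [NormedAddCommGroup K] [InnerProductSpace ℂ K] [CompleteSpace K]
    (A Z : K →L[ℂ] H)
    (BK : K →L[ℂ] K)
    (hBK₁ : BK ∘L (1 - adjoint A ∘L A) = 1)
    (BH : H →L[ℂ] H)
    (hBH₂ : (1 - A ∘L adjoint A) ∘L BH = 1) :
    (Z - A) ∘L BK ∘L (1 - adjoint A ∘L Z) = (1 - Z ∘L adjoint A) ∘L BH ∘L (Z - A) :=
  sub_comp_inverse_comp_one_sub_comp A Z (adjoint A) hBK₁ hBH₂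

/-- For Hilbert spaces `H, K` and contractions `A, Z : K → H`
(`‖A‖ < 1`, `‖Z‖ < 1`), with `BK = (I − A*A)⁻¹` and `BH = (I − AA*)⁻¹`, one has the operator
identity `(Z − A)(I − A*A)⁻¹(I − A*Z) = (I − ZA*)(I − AA*)⁻¹(Z − A)`. -/
theorem operator_identity
    {H K : Type*} [NormedAddCommGroup H] [InnerProductSpace ℂ H] [CompleteSpace H]
    [NormedAddCommGroup K] [InnerProductSpace ℂ K] [CompleteSpace K]
    (A Z : K →L[ℂ] H) (hA : ‖A‖ < 1) (hZ : ‖Z‖ < 1)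
    (BK : K →L[ℂ] K)
    (hBK₁ : BK ∘L (1 - adjoint A ∘L A) = 1) (hBK₂ : (1 - adjoint A ∘L A) ∘L BK = 1)
    (BH : H →L[ℂ] H)
    (hBH₁ : BH ∘L (1 - A ∘L adjoint A) = 1) (hBH₂ : (1 - A ∘L adjoint A) ∘L BH = 1) :
    (Z - A) ∘L BK ∘L (1 - adjoint A ∘L Z) = (1 - Z ∘L adjoint A) ∘L BH ∘L (Z - A) :=
  operator_identity_general A Z BK hBK₁ BH hBH₂
end

section
/- Let T be a closed densely-defined operator from a complex Hilbert space H to a finite-dimensional complex Hilbert space K. Then ‖T(I + T*T)^{−1/2}‖² = ‖TT*‖/(1 + ‖TT*‖) < 1; in particular the operator T̂ = (I + T*T)^{−1/2}T* is a bounded operator from K to H with ‖T̂‖ < 1. -/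
/-!
`T̂` is the adjoint of `C = T(I + T*T)^{-1/2}`, so `‖C‖² = ‖C T̂‖` by the C*-identity. Unwinding
the domains gives `C T̂ (1 + TT*) = TT*`, i.e. `C T̂ = f(TT*)` for `f t = t / (1 + t)` in the
functional calculus of the positive operator `TT*` on `K`. As `f` is increasing and the norm of a
positive operator is the top of its spectrum, `‖C T̂‖ = f ‖TT*‖ < 1`.
-/

open ContinuousLinearMap NNReal

lemma CStarAlgebra.norm_eq_div_one_add_norm_of_mul_one_add_eq {A : Type*} [CStarAlgebra A]
    [PartialOrder A] [StarOrderedRing A] {a d : A} (ha : 0 ≤ a) (hd : d * (1 + a) = a) :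
    ‖d‖ = ‖a‖ / (1 + ‖a‖) := by
  nontriviality A
  set f : ℝ≥0 → ℝ≥0 := fun x => x / (1 + x)
  have h_one_add : cfc (fun x : ℝ≥0 => 1 + x) a = 1 + a := by
    rw [cfc_const_add 1 (fun x => x) a, cfc_id' ℝ≥0 a, map_one]
  have h_unit : IsUnit (1 + a) := by
    rw [← h_one_add, isUnit_cfc_iff _ a]
    intro x _
    positivity
  have h_cfc : cfc f a * (1 + a) = a := by
    rw [← h_one_add, ← cfc_mul f _ a]
    conv_rhs => rw [← cfc_id' ℝ≥0 a]
    refine cfc_congr fun x _ => ?_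
    exact div_mul_cancel₀ _ (by positivity)
  have hd_eq : d = cfc f a := h_unit.mul_left_inj.mp (hd.trans h_cfc.symm)
  have h_mono : Monotone f := fun x y hxy => by
    rw [div_le_div_iff₀ (by positivity) (by positivity)]
    simpa [mul_add, mul_comm] using hxy
  rw [hd_eq, ← coe_nnnorm, MonotoneOn.nnnorm_cfc f a (h_mono.monotoneOn _)]
  simp [f]

namespace LinearPMap

variable {H K : Type*} [NormedAddCommGroup H] [InnerProductSpace ℂ H]
  [NormedAddCommGroup K] [InnerProductSpace ℂ K] {T : H →ₗ.[ℂ] K} {R : K →ₗ.[ℂ] H}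

theorem IsFormalAdjoint.isPositive_of_apply_eq_comp (hR : T.IsFormalAdjoint R) {A : K →L[ℂ] K}
    (hA : ∀ y : K, ∃ (hy : y ∈ R.domain) (h2 : R ⟨y, hy⟩ ∈ T.domain),
      A y = T ⟨R ⟨y, hy⟩, h2⟩) :
    A.IsPositive := by
  have h_inner : ∀ x y : K, ∃ (hx : x ∈ R.domain) (hy : y ∈ R.domain),
      inner ℂ (A x) y = inner ℂ (R ⟨x, hx⟩) (R ⟨y, hy⟩) := fun x y => by
    obtain ⟨hx, hx2, hAx⟩ := hA x
    obtain ⟨hy, -, -⟩ := hA y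
    exact ⟨hx, hy, hAx ▸ hR ⟨_, hx2⟩ ⟨y, hy⟩⟩
  refine isPositive_def.mpr ⟨fun x y => ?_, fun x => ?_⟩
  · obtain ⟨_, _, hxy⟩ := h_inner x y
    obtain ⟨_, _, hyx⟩ := h_inner y x
    change inner ℂ (A x) y = inner ℂ x (A y)
    rw [← inner_conj_symm x, hxy, hyx, inner_conj_symm]
  · obtain ⟨_, _, hxx⟩ := h_inner x x
    rw [reApplyInnerSelf_apply, hxx]
    exact inner_self_nonneg

theorem IsFormalAdjoint.eq_adjoint_of_apply_eq [CompleteSpace H] [CompleteSpace K]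
    (hR : R.IsFormalAdjoint T) {S : H →L[ℂ] H} (hS : IsSelfAdjoint S) {C : H →L[ℂ] K}
    (hC : ∀ x : H, ∃ hx : S x ∈ T.domain, C x = T ⟨S x, hx⟩) {That : K →L[ℂ] H}
    (hThat : ∀ y : K, ∃ hy : y ∈ R.domain, That y = S (R ⟨y, hy⟩)) :
    That = ContinuousLinearMap.adjoint C := by
  refine (eq_adjoint_iff That C).mpr fun y x => ?_
  obtain ⟨hy, hThat_y⟩ := hThat y
  obtain ⟨hx, hC_x⟩ := hC x
  rw [hThat_y, hC_x]
  exact (hS.isSymmetric _ _).trans (hR ⟨y, hy⟩ ⟨S x, hx⟩)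

theorem comp_comp_one_add_eq {B S : H →L[ℂ] H}
    (hBleft : ∀ (x : H) (hx : x ∈ T.domain) (hy : T ⟨x, hx⟩ ∈ R.domain),
      B (x + R ⟨T ⟨x, hx⟩, hy⟩) = x)
    (hS2 : S ∘L S = B) {A : K →L[ℂ] K}
    (hA : ∀ y : K, ∃ (hy : y ∈ R.domain) (h2 : R ⟨y, hy⟩ ∈ T.domain),
      A y = T ⟨R ⟨y, hy⟩, h2⟩)
    {C : H →L[ℂ] K} (hC : ∀ x : H, ∃ hx : S x ∈ T.domain, C x = T ⟨S x, hx⟩)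
    {That : K →L[ℂ] H} (hThat : ∀ y : K, ∃ hy : y ∈ R.domain, That y = S (R ⟨y, hy⟩)) :
    (C ∘L That) ∘L (1 + A) = A := by
  ext y
  obtain ⟨hy, hu, hAy⟩ := hA y
  obtain ⟨hAy_mem, -, -⟩ := hA (A y)
  obtain ⟨hsum, hThat_sum⟩ := hThat (y + A y)
  set u := R ⟨y, hy⟩
  have hTu_mem : T ⟨u, hu⟩ ∈ R.domain := hAy ▸ hAy_mem
  have h_resolvent : R ⟨y + A y, hsum⟩ = u + R ⟨T ⟨u, hu⟩, hTu_mem⟩ := by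
    rw [← R.map_add]
    congr 2
    exact congrArg (y + ·) hAy
  have hSS : S (That (y + A y)) = u := by
    rw [hThat_sum, ← comp_apply S S, hS2, h_resolvent, hBleft]
  obtain ⟨hSThat, hC_That⟩ := hC (That (y + A y))
  change C (That (y + A y)) = A y
  rw [hC_That]
  exact (congrArg T (Subtype.ext hSS)).trans hAy.symm

end LinearPMap

theorem norm_sq_eq_and_hat_lt_one_general
    {H K : Type*} [NormedAddCommGroup H] [InnerProductSpace ℂ H] [CompleteSpace H]
    [NormedAddCommGroup K] [InnerProductSpace ℂ K] [FiniteDimensional ℂ K]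
    (T : H →ₗ.[ℂ] K) (hd : Dense (T.domain : Set H))
    (B : H →L[ℂ] H)
    (hBleft : ∀ (x : H) (hx : x ∈ T.domain) (hy : T ⟨x, hx⟩ ∈ T.adjoint.domain),
      B (x + T.adjoint ⟨T ⟨x, hx⟩, hy⟩) = x)
    (S : H →L[ℂ] H) (hS : S.IsPositive) (hS2 : S ∘L S = B)
    (A : K →L[ℂ] K)
    (hA : ∀ y : K, ∃ (hy : y ∈ T.adjoint.domain) (h2 : T.adjoint ⟨y, hy⟩ ∈ T.domain),
      A y = T ⟨T.adjoint ⟨y, hy⟩, h2⟩)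
    (C : H →L[ℂ] K) (hC : ∀ x : H, ∃ hx : S x ∈ T.domain, C x = T ⟨S x, hx⟩)
    (That : K →L[ℂ] H)
    (hThat : ∀ y : K, ∃ hy : y ∈ T.adjoint.domain, That y = S (T.adjoint ⟨y, hy⟩)) :
    ‖C‖ ^ 2 = ‖A‖ / (1 + ‖A‖) ∧ ‖C‖ ^ 2 < 1 ∧ ‖That‖ < 1 := by
  have hT : T.adjoint.IsFormalAdjoint T := T.adjoint_isFormalAdjoint hd
  have hThat_eq : That = adjoint C := hT.eq_adjoint_of_apply_eq hS.isSelfAdjoint hC hThat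
  have hA_nonneg : 0 ≤ A := (nonneg_iff_isPositive A).mpr (hT.symm.isPositive_of_apply_eq_comp hA)
  have hC_sq : ‖C‖ ^ 2 = ‖C ∘L That‖ := by
    simpa [hThat_eq, sq] using (norm_adjoint_comp_self (adjoint C)).symm
  have hC_sq_eq : ‖C‖ ^ 2 = ‖A‖ / (1 + ‖A‖) := hC_sq.trans <|
    CStarAlgebra.norm_eq_div_one_add_norm_of_mul_one_add_eq hA_nonneg
      (LinearPMap.comp_comp_one_add_eq hBleft hS2 hA hC hThat)
  have hC_sq_lt : ‖C‖ ^ 2 < 1 := hC_sq_eq ▸ (div_lt_one (by positivity)).mpr (lt_one_add _)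
  refine ⟨hC_sq_eq, hC_sq_lt, ?_⟩
  rw [hThat_eq, adjoint.norm_map]
  exact (sq_lt_one_iff₀ (norm_nonneg C)).mp hC_sq_lt

/-- Let `T : H →ₗ. K` be closed and densely defined with `K`
finite-dimensional.  With `B = (I + T*T)⁻¹`, `S = (I + T*T)^{−1/2}` its positive square root,
`A = TT*` (bounded on `K`), `C = T(I + T*T)^{−1/2}` and `T̂ = (I + T*T)^{−1/2}T*`, one has
`‖C‖² = ‖TT*‖/(1 + ‖TT*‖) < 1`; in particular `‖T̂‖ < 1`. -/
theorem norm_sq_eq_and_hat_lt_one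
    {H K : Type*} [NormedAddCommGroup H] [InnerProductSpace ℂ H] [CompleteSpace H]
    [NormedAddCommGroup K] [InnerProductSpace ℂ K] [FiniteDimensional ℂ K]
    (T : H →ₗ.[ℂ] K) (hd : Dense (T.domain : Set H)) (hc : T.IsClosed)
    (B : H →L[ℂ] H) (hB : B.IsPositive)
    (hBright : ∀ u : H, ∃ (hx : B u ∈ T.domain) (hy : T ⟨B u, hx⟩ ∈ T.adjoint.domain),
      B u + T.adjoint ⟨T ⟨B u, hx⟩, hy⟩ = u)
    (hBleft : ∀ (x : H) (hx : x ∈ T.domain) (hy : T ⟨x, hx⟩ ∈ T.adjoint.domain),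
      B (x + T.adjoint ⟨T ⟨x, hx⟩, hy⟩) = x)
    (S : H →L[ℂ] H) (hS : S.IsPositive) (hS2 : S ∘L S = B)
    (A : K →L[ℂ] K)
    (hA : ∀ y : K, ∃ (hy : y ∈ T.adjoint.domain) (h2 : T.adjoint ⟨y, hy⟩ ∈ T.domain),
      A y = T ⟨T.adjoint ⟨y, hy⟩, h2⟩)
    (C : H →L[ℂ] K) (hC : ∀ x : H, ∃ hx : S x ∈ T.domain, C x = T ⟨S x, hx⟩)
    (That : K →L[ℂ] H)
    (hThat : ∀ y : K, ∃ hy : y ∈ T.adjoint.domain, That y = S (T.adjoint ⟨y, hy⟩)) :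
    ‖C‖ ^ 2 = ‖A‖ / (1 + ‖A‖) ∧ ‖C‖ ^ 2 < 1 ∧ ‖That‖ < 1 :=
  norm_sq_eq_and_hat_lt_one_general T hd B hBleft S hS hS2 A hA C hC That hThat
end

section
/- Let H, K be complex Hilbert spaces and let A : K → H be a bounded operator with ‖A‖ < 1. Then ker(I − A*A) = {0}, and consequently (I − A*A)^{−1/2} is a (possibly unbounded) densely-defined self-adjoint operator; moreover A₀ = (I − A*A)^{−1/2}A* is a closed densely-defined operator from H to K satisfying (I + A₀*A₀)^{−1/2}A₀* = A. -/
open ContinuousLinearMap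

/-!
Since `‖A*A‖ = ‖A‖² < 1`, the operator `I - A*A = Q²` is invertible, hence so is `Q`, and `A₀` is
the bounded, everywhere defined operator `Q⁻¹A*`, with adjoint `AQ⁻¹`. The push-through identity
`(I - AA*)(I + A(I - A*A)⁻¹A*) = I` identifies `(I + A₀*A₀)⁻¹` with `I - AA*`, so `S₀² = I - AA*`
and `S₀²A = AQ²`. On `H ⊕ K` this says that the off-diagonal operator with entry `A` commutes with
the square of the positive operator `diag(S₀, Q)`, hence with its square root `diag(S₀, Q)` itself;
that is, `S₀A = AQ`, and therefore `S₀A₀* = AQQ⁻¹ = A`.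
-/

theorem Commute.of_mul_self_left {A : Type*} [CStarAlgebra A] [PartialOrder A]
    [StarOrderedRing A] {a x : A} (ha : 0 ≤ a) (h : Commute (a * a) x) : Commute a x :=
  CFC.sqrt_mul_self a ▸ h.cfcₙ_nnreal NNReal.sqrt

section RingInverse

variable {F α : Type*} [MonoidWithZero F] [FunLike F α α] [IsMulApplyEqComp F α]
  [IsOneApplyEqSelf F α] {f : F}

theorem IsUnit.apply_ringInverse_apply (hf : IsUnit f) (x : α) : f (Ring.inverse f x) = x := by
  rw [← mul_apply_eq_comp, Ring.mul_inverse_cancel f hf, one_apply_eq_self]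

theorem IsUnit.ringInverse_apply_apply (hf : IsUnit f) (x : α) : Ring.inverse f (f x) = x := by
  rw [← mul_apply_eq_comp, Ring.inverse_mul_cancel f hf, one_apply_eq_self]

theorem IsUnit.apply_eq_iff_eq_ringInverse_apply (hf : IsUnit f) {x y : α} :
    f x = y ↔ x = Ring.inverse f y :=
  ⟨fun h => h ▸ (hf.ringInverse_apply_apply x).symm, fun h => h ▸ hf.apply_ringInverse_apply y⟩

end RingInverse

theorem LinearPMap.eq_toPMap_top_of_mem_graph_iff {R E F : Type*} [Ring R]
    [AddCommGroup E] [Module R E] [AddCommGroup F] [Module R F]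
    {f : E →ₗ.[R] F} {T : E →ₗ[R] F} (h : ∀ x y, (x, y) ∈ f.graph ↔ y = T x) :
    f = T.toPMap ⊤ := by
  refine LinearPMap.eq_of_eq_graph (Submodule.ext fun ⟨x, y⟩ => ?_)
  rw [h, LinearPMap.mem_graph_iff]
  simp [eq_comm]

namespace ContinuousLinearMap

theorem one_sub_comp_mul_one_add_comp_comp_eq_one {R E F : Type*} [Ring R]
    [AddCommGroup E] [Module R E] [TopologicalSpace E] [IsTopologicalAddGroup E]
    [AddCommGroup F] [Module R F] [TopologicalSpace F] [IsTopologicalAddGroup F]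
    (A : F →L[R] E) (B : E →L[R] F) {P : F →L[R] F} (hP : (1 - B ∘L A) * P = 1) :
    (1 - A ∘L B) * (1 + A ∘L P ∘L B) = 1 := by
  have hAB : (1 - A ∘L B) ∘L A = A ∘L (1 - B ∘L A) := by
    ext x; simp
  calc (1 - A ∘L B) * (1 + A ∘L P ∘L B) = (1 - A ∘L B) + ((1 - A ∘L B) ∘L A) ∘L P ∘L B := by
        rw [mul_add, mul_one]; rfl
    _ = (1 - A ∘L B) + A ∘L ((1 - B ∘L A) * P) ∘L B := by rw [hAB]; rfl
    _ = 1 := by rw [hP]; ext x; simp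

section InnerProductSpace

variable {𝕜 E F : Type*} [RCLike 𝕜] [NormedAddCommGroup E] [InnerProductSpace 𝕜 E]
  [NormedAddCommGroup F] [InnerProductSpace 𝕜 F]

theorem isUnit_one_sub_adjoint_comp_self [CompleteSpace E] [CompleteSpace F] {A : F →L[𝕜] E}
    (hA : ‖A‖ < 1) : IsUnit (1 - adjoint A ∘L A) := by
  refine isUnit_one_sub_of_norm_lt_one ?_
  rw [norm_adjoint_comp_self]
  exact mul_lt_one_of_nonneg_of_lt_one_left (norm_nonneg A) hA hA.le

theorem toPMap_top_adjoint_domain [CompleteSpace E] [CompleteSpace F] (T : E →L[𝕜] F) :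
    (T.toPMap ⊤).adjoint.domain = ⊤ := by
  rw [toPMap_adjoint_eq_adjoint_toPMap_of_dense T (by simp)]
  rfl

theorem toPMap_top_adjoint_apply [CompleteSpace E] [CompleteSpace F] (T : E →L[𝕜] F) {y : F}
    (hy : y ∈ (T.toPMap ⊤).adjoint.domain) : (T.toPMap ⊤).adjoint ⟨y, hy⟩ = adjoint T y :=
  LinearPMap.adjoint_apply_eq (by simp) _ fun x => by rw [adjoint_inner_left]; rfl

def blockDiag (S : E →L[𝕜] E) (T : F →L[𝕜] F) : WithLp 2 (E × F) →L[𝕜] WithLp 2 (E × F) :=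
  (WithLp.prodContinuousLinearEquiv 2 𝕜 E F).symm.toContinuousLinearMap ∘L S.prodMap T ∘L
    (WithLp.prodContinuousLinearEquiv 2 𝕜 E F).toContinuousLinearMap

def blockUpperRight (A : F →L[𝕜] E) : WithLp 2 (E × F) →L[𝕜] WithLp 2 (E × F) :=
  (WithLp.prodContinuousLinearEquiv 2 𝕜 E F).symm.toContinuousLinearMap ∘L
    (A ∘L snd 𝕜 E F).prod 0 ∘L (WithLp.prodContinuousLinearEquiv 2 𝕜 E F).toContinuousLinearMap

@[simp]
theorem blockDiag_apply (S : E →L[𝕜] E) (T : F →L[𝕜] F) (z : WithLp 2 (E × F)) :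
    blockDiag S T z = WithLp.toLp 2 (S z.fst, T z.snd) := rfl

@[simp]
theorem blockUpperRight_apply (A : F →L[𝕜] E) (z : WithLp 2 (E × F)) :
    blockUpperRight A z = WithLp.toLp 2 (A z.snd, 0) := rfl

open scoped ComplexOrder in
theorem IsPositive.blockDiag {S : E →L[𝕜] E} {T : F →L[𝕜] F} (hS : S.IsPositive)
    (hT : T.IsPositive) : (blockDiag S T).IsPositive := by
  refine (isPositive_iff _).2 ⟨fun z w => ?_, fun z => ?_⟩
  · simp [WithLp.prod_inner_apply, hS.inner_left_eq_inner_right, hT.inner_left_eq_inner_right]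
  · simpa [WithLp.prod_inner_apply] using
      add_nonneg (hS.inner_nonneg_left z.fst) (hT.inner_nonneg_left z.snd)

end InnerProductSpace

variable {H K : Type*} [NormedAddCommGroup H] [InnerProductSpace ℂ H] [CompleteSpace H]
  [NormedAddCommGroup K] [InnerProductSpace ℂ K] [CompleteSpace K]

theorem comp_eq_comp_of_comp_comp_eq_comp_comp {S : H →L[ℂ] H} {Q : K →L[ℂ] K}
    (hS : S.IsPositive) (hQ : Q.IsPositive) {A : K →L[ℂ] H} (h : S ∘L S ∘L A = A ∘L Q ∘L Q) :
    S ∘L A = A ∘L Q := by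
  have hsq : Commute (blockDiag S Q * blockDiag S Q) (blockUpperRight A) := by
    ext z; simp [← comp_apply, h]
  have hcomm := (hsq.of_mul_self_left ((nonneg_iff_isPositive _).2 (hS.blockDiag hQ))).eq
  ext y
  simpa using congr(($hcomm (WithLp.toLp 2 (0, y))).fst)

theorem comp_adjoint_ringInverse_comp_adjoint_eq {A : K →L[ℂ] H} {Q : K →L[ℂ] K}
    (hQ : Q.IsPositive) (hQunit : IsUnit Q) (hQ2 : Q ∘L Q = 1 - adjoint A ∘L A)
    {B S : H →L[ℂ] H} (hB : (1 + adjoint (Ring.inverse Q ∘L adjoint A) ∘L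
      (Ring.inverse Q ∘L adjoint A)) * B = 1) (hS : S.IsPositive) (hSB : S ∘L S = B) :
    S ∘L adjoint (Ring.inverse Q ∘L adjoint A) = A := by
  have hadj : adjoint (Ring.inverse Q ∘L adjoint A) = A ∘L Ring.inverse Q := by
    rw [adjoint_comp, adjoint_adjoint, hQ.isSelfAdjoint.ringInverse.adjoint_eq]
  have hR : (1 - adjoint A ∘L A) * (Ring.inverse Q * Ring.inverse Q) = 1 := by
    rw [← hQ2, ← mul_def, mul_assoc, ← mul_assoc Q (Ring.inverse Q),
      Ring.mul_inverse_cancel _ hQunit, one_mul, Ring.mul_inverse_cancel _ hQunit]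
  have hB_eq : B = 1 - A ∘L adjoint A := by
    refine (left_inv_eq_right_inv (one_sub_comp_mul_one_add_comp_comp_eq_one A _ hR) ?_).symm
    rwa [hadj] at hB
  have hSA : S ∘L A = A ∘L Q := by
    refine comp_eq_comp_of_comp_comp_eq_comp_comp hS hQ ?_
    rw [← comp_assoc, hSB, hQ2, hB_eq]
    ext x; simp
  ext y
  rw [hadj, ← comp_assoc, hSA]
  exact congr(A $(hQunit.apply_ringInverse_apply y))

end ContinuousLinearMap

/-- Let `A : K →L H` with `‖A‖ < 1`.  Then `ker (I − A*A) = 0`, the domain of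
`(I − A*A)^{−1/2}` (the range of `Q = (I − A*A)^{1/2}`) is dense, and the operator
`A₀ = (I − A*A)^{−1/2}A*` (characterized by its graph `{(x, y) : Q y = A* x}`) is a closed
densely-defined operator from `H` to `K` satisfying `(I + A₀*A₀)^{−1/2}A₀* = A`, where
`(I + A₀*A₀)^{−1/2}` is the positive square root `S₀` of the inverse `B₀` of `I + A₀*A₀`. -/
theorem ker_trivial_and_hat_eq
    {H K : Type*} [NormedAddCommGroup H] [InnerProductSpace ℂ H] [CompleteSpace H]
    [NormedAddCommGroup K] [InnerProductSpace ℂ K] [CompleteSpace K]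
    (A : K →L[ℂ] H) (hA : ‖A‖ < 1)
    (Q : K →L[ℂ] K) (hQ : Q.IsPositive) (hQ2 : Q ∘L Q = 1 - adjoint A ∘L A)
    (A₀ : H →ₗ.[ℂ] K)
    (hA₀ : ∀ (x : H) (y : K), (x, y) ∈ A₀.graph ↔ Q y = adjoint A x) :
    LinearMap.ker ((1 - adjoint A ∘L A : K →L[ℂ] K) : K →ₗ[ℂ] K) = ⊥ ∧
    Dense (Set.range Q : Set K) ∧
    Dense (A₀.domain : Set H) ∧
    A₀.IsClosed ∧
    (∀ B₀ : H →L[ℂ] H, B₀.IsPositive →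
      (∀ u : H, ∃ (hx : B₀ u ∈ A₀.domain) (hy : A₀ ⟨B₀ u, hx⟩ ∈ A₀.adjoint.domain),
        B₀ u + A₀.adjoint ⟨A₀ ⟨B₀ u, hx⟩, hy⟩ = u) →
      (∀ (x : H) (hx : x ∈ A₀.domain) (hy : A₀ ⟨x, hx⟩ ∈ A₀.adjoint.domain),
        B₀ (x + A₀.adjoint ⟨A₀ ⟨x, hx⟩, hy⟩) = x) →
      ∀ S₀ : H →L[ℂ] H, S₀.IsPositive → S₀ ∘L S₀ = B₀ →
        ∀ y : K, ∃ hy : y ∈ A₀.adjoint.domain, S₀ (A₀.adjoint ⟨y, hy⟩) = A y) := by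
  have hunit := isUnit_one_sub_adjoint_comp_self hA
  have hQunit : IsUnit Q := isUnit_mul_self_iff.mp (hQ2 ▸ hunit : IsUnit (Q ∘L Q))
  set T : H →L[ℂ] K := Ring.inverse Q ∘L adjoint A
  obtain rfl : A₀ = T.toPMap ⊤ :=
    LinearPMap.eq_toPMap_top_of_mem_graph_iff fun x y =>
      (hA₀ x y).trans hQunit.apply_eq_iff_eq_ringInverse_apply
  refine ⟨LinearMap.ker_eq_bot.mpr (isUnit_iff_bijective.mp hunit).injective,
    (isUnit_iff_bijective.mp hQunit).surjective.denseRange, by simp, ?_, ?_⟩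
  · have hgraph : ((T.toPMap ⊤).graph : Set (H × K)) = {p | Q p.2 = adjoint A p.1} :=
      Set.ext fun p => hA₀ p.1 p.2
    rw [LinearPMap.IsClosed, hgraph]
    exact isClosed_eq (by fun_prop) (by fun_prop)
  · rintro B₀ - hB₀ - S₀ hS₀ hS₀B₀ y
    have hB₀inv : (1 + adjoint T ∘L T) * B₀ = 1 := by
      ext u
      obtain ⟨_, _, hu⟩ := hB₀ u
      rwa [toPMap_top_adjoint_apply T] at hu
    refine ⟨(toPMap_top_adjoint_domain T).symm ▸ Submodule.mem_top, ?_⟩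
    rw [toPMap_top_adjoint_apply T]
    exact congr($(comp_adjoint_ringInverse_comp_adjoint_eq hQ hQunit hQ2 hB₀inv hS₀ hS₀B₀) y)
end

section
/- Let A be a bounded operator from a complex Hilbert space K to a complex Hilbert space H with ‖A‖ < 1, and let T = (I − A*A)^{−1/2}A* with domain D((I − AA*)^{−1/2}) in H. Then for each x in the domain of T, ‖Tx‖² + ‖x‖² = ‖(I − AA*)^{−1/2}x‖². -/
open ContinuousLinearMap

theorem ContinuousLinearMap.norm_sq_add_norm_sq_of_adjoint_comp_self_add
    {𝕜 E F G : Type*} [RCLike 𝕜]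
    [NormedAddCommGroup E] [InnerProductSpace 𝕜 E] [CompleteSpace E]
    [NormedAddCommGroup F] [InnerProductSpace 𝕜 F] [CompleteSpace F]
    [NormedAddCommGroup G] [InnerProductSpace 𝕜 G] [CompleteSpace G]
    {P : E →L[𝕜] F} {B : E →L[𝕜] G} (h : adjoint P ∘L P + adjoint B ∘L B = 1) (y : E) :
    ‖B y‖ ^ 2 + ‖P y‖ ^ 2 = ‖y‖ ^ 2 := by
  rw [apply_norm_sq_eq_inner_adjoint_left, apply_norm_sq_eq_inner_adjoint_left, ← map_add,
    ← inner_add_left, ← add_apply, add_comm, h, one_apply_eq_self, inner_self_eq_norm_sq]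

/-- The domain of `T` is `range P`; for `x = P y` one has `(I − AA*)^{−1/2} x = y` and
`T x = A* y`. -/
theorem norm_identity_for_T_general
    {H K : Type*} [NormedAddCommGroup H] [InnerProductSpace ℂ H] [CompleteSpace H]
    [NormedAddCommGroup K] [InnerProductSpace ℂ K] [CompleteSpace K]
    (A : K →L[ℂ] H)
    (P : H →L[ℂ] H) (hP : P.IsPositive) (hP2 : P ∘L P = 1 - A ∘L adjoint A) :
    ∀ x y : H, P y = x → ‖adjoint A y‖ ^ 2 + ‖x‖ ^ 2 = ‖y‖ ^ 2 := by
  rintro x y rfl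
  refine norm_sq_add_norm_sq_of_adjoint_comp_self_add ?_ y
  rw [hP.isSelfAdjoint.adjoint_eq, adjoint_adjoint, hP2, sub_add_cancel]

/-- Let `A : K →L H`, `‖A‖ < 1`, and let `P = (I − AA*)^{1/2}` be the positive
square root of `I − AA*`.  For `T = (I − A*A)^{−1/2}A*`, interpreted via
`T x = A*((I − AA*)^{−1/2} x)` on the domain `D((I − AA*)^{−1/2}) = range P`, one has
`‖Tx‖² + ‖x‖² = ‖(I − AA*)^{−1/2}x‖²` for every `x` in the domain; i.e. for `x = P y`,
`‖A* y‖² + ‖x‖² = ‖y‖²`. -/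
theorem norm_identity_for_T
    {H K : Type*} [NormedAddCommGroup H] [InnerProductSpace ℂ H] [CompleteSpace H]
    [NormedAddCommGroup K] [InnerProductSpace ℂ K] [CompleteSpace K]
    (A : K →L[ℂ] H) (hA : ‖A‖ < 1)
    (P : H →L[ℂ] H) (hP : P.IsPositive) (hP2 : P ∘L P = 1 - A ∘L adjoint A) :
    ∀ x y : H, P y = x → ‖adjoint A y‖ ^ 2 + ‖x‖ ^ 2 = ‖y‖ ^ 2 :=
  norm_identity_for_T_general A P hP hP2
end

section
/- Let A be a bounded complex symmetric operator from K to H with ‖A‖ < 1, with respect to a conjugation pair. Then T = (I − A*A)^{−1/2}A* is a closed densely-defined complex symmetric operator from H to K, i.e. there exists a conjugation pair (𝒞₁, 𝒞₂) from H to K such that T𝒞₂ = 𝒞₁T*. -/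
/-!
Since `‖A‖ < 1`, the operator `P² = 1 - AA*` is invertible, hence so is `P`, and `T` is the
everywhere defined bounded operator `T₀ = A* P⁻¹`; so `T` is closed and densely defined and `T*`
is the bounded adjoint `T₀*`.

It remains to find an antilinear isometry `D : K → H` with `⟪T₀ D y, y'⟫` symmetric in `y, y'`:
`D` and its conjugate adjoint are then the conjugation pair. Let `Q = (T₀ T₀*)^{1/2}`. By Zorn's
lemma there is a maximal `Q`-invariant real subspace `E ⊆ K` on which `⟪·,·⟫` is real-valued;
adjoining real spans of `Q`-orbits shows that `E + iE` is dense, so the reflection in `E` is a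
conjugation `J` of `K` commuting with `Q`. On `(ker Q)ᗮ` take `D = W J`, where `T₀* = W Q` is the
polar decomposition. On `ker Q = ker A` take `D = P C₁`: there `A* C₁ = C₂ A = 0`, so
`P² = 1 - AA*` makes `P C₁` isometric and `T₀ P C₁ = A* C₁ = 0`.
-/

open ContinuousLinearMap
open scoped InnerProductSpace

namespace Submodule

variable {K : Type*} [NormedAddCommGroup K] [InnerProductSpace ℂ K]

def IsInnerReal (E : Submodule ℝ K) : Prop :=
  ∀ a ∈ E, ∀ b ∈ E, (⟪a, b⟫_ℂ).im = 0

theorem isInnerReal_span {s : Set K} (hs : ∀ a ∈ s, ∀ b ∈ s, (⟪a, b⟫_ℂ).im = 0) :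
    (span ℝ s).IsInnerReal := by
  intro a ha b hb
  induction ha using span_induction generalizing b with
  | mem a ha =>
    induction hb using span_induction with
    | mem b hb => exact hs a ha b hb
    | zero => simp
    | add _ _ _ _ h h' => simp [h, h']
    | smul r _ _ h => simp [← Complex.coe_smul, h]
  | zero => simp
  | add _ _ _ _ h h' => simp [h b hb, h' b hb]
  | smul r _ _ h => simp [← Complex.coe_smul, h b hb]

theorem IsInnerReal.topologicalClosure {E : Submodule ℝ K} (hE : E.IsInnerReal) :
    E.topologicalClosure.IsInnerReal := by
  intro a ha b hb
  have hcl : IsClosed {p : K × K | (⟪p.1, p.2⟫_ℂ).im = 0} :=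
    isClosed_eq (Complex.continuous_im.comp continuous_inner) continuous_const
  have h := closure_minimal (s := (E : Set K) ×ˢ (E : Set K)) (fun p hp => hE _ hp.1 _ hp.2) hcl
  rw [closure_prod_eq] at h
  rw [← SetLike.mem_coe, topologicalClosure_coe] at ha hb
  exact h (Set.mk_mem_prod ha hb)

theorem mapsTo_topologicalClosure {E : Submodule ℝ K} {Q : K →L[ℂ] K}
    (hQE : Set.MapsTo Q E E) : Set.MapsTo Q E.topologicalClosure E.topologicalClosure := by
  simpa only [topologicalClosure_coe] using hQE.closure Q.continuous

theorem exists_maximal_isInnerReal_mapsTo (Q : K →L[ℂ] K) :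
    ∃ E : Submodule ℝ K,
      Maximal (fun E : Submodule ℝ K => E.IsInnerReal ∧ Set.MapsTo Q E E) E := by
  refine (zorn_le_nonempty₀ {E : Submodule ℝ K | E.IsInnerReal ∧ Set.MapsTo Q E E}
    (fun c hcS hc E₀ hE₀ => ?_) ⊥ ⟨fun a ha b hb => by simp_all, fun a ha => by simp_all⟩).imp
    fun _ h => h.2
  have hmem : ∀ x, x ∈ sSup c ↔ ∃ E ∈ c, x ∈ E :=
    fun x => mem_sSup_of_directed ⟨E₀, hE₀⟩ hc.directedOn
  refine ⟨sSup c, ⟨fun a ha b hb => ?_, fun a ha => ?_⟩, fun E hE => le_sSup hE⟩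
  · obtain ⟨Ea, hEa, ha⟩ := (hmem a).1 ha
    obtain ⟨Eb, hEb, hb⟩ := (hmem b).1 hb
    rcases hc.total hEa hEb with h | h
    · exact (hcS hEb).1 a (h ha) b hb
    · exact (hcS hEa).1 a ha b (h hb)
  · obtain ⟨E, hE, ha⟩ := (hmem a).1 ha
    exact (hmem (Q a)).2 ⟨E, hE, (hcS hE).2 ha⟩

theorem orthogonal_span_eq_bot_of_maximal {Q : K →L[ℂ] K} (hQ : (Q : K →ₗ[ℂ] K).IsSymmetric)
    {E : Submodule ℝ K}
    (hE : Maximal (fun E : Submodule ℝ K => E.IsInnerReal ∧ Set.MapsTo Q E E) E) :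
    (span ℂ (E : Set K))ᗮ = ⊥ := by
  have hQn (n : ℕ) (a b : K) : ⟪Q^[n] a, b⟫_ℂ = ⟪a, Q^[n] b⟫_ℂ := by
    simpa [Module.End.pow_apply] using hQ.pow n a b
  refine (Submodule.eq_bot_iff _).2 fun x hx => ?_
  have hpow (n : ℕ) : Q^[n] x ∈ (span ℂ (E : Set K))ᗮ := by
    refine (mem_orthogonal _ _).2 fun u hu => ?_
    have hEn : Set.MapsTo ((Q : K →ₗ[ℂ] K) ^ n) E E := by
      simpa [Module.End.coe_pow] using hE.1.2.iterate n
    rw [← hQn]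
    simpa [Module.End.pow_apply] using (mem_orthogonal _ _).1 hx _ (mapsTo_span hEn hu)
  -- The real span of the `Q`-orbit of `x` is inner-real and orthogonal to `E`; adjoin it to `E`.
  set s : Set K := (E : Set K) ∪ Set.range fun n : ℕ => Q^[n] x
  have hs : (span ℝ s).IsInnerReal ∧ Set.MapsTo Q (span ℝ s) (span ℝ s) := by
    refine ⟨isInnerReal_span ?_, ?_⟩
    · rintro a (ha | ⟨n, rfl⟩) b (hb | ⟨m, rfl⟩)
      · exact hE.1.1 a ha b hb
      · simp [(mem_orthogonal _ _).1 (hpow m) a (subset_span ha)]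
      · simp [(mem_orthogonal' _ _).1 (hpow n) b (subset_span hb)]
      · dsimp only
        rw [← Complex.conj_eq_iff_im, inner_conj_symm, hQn, hQn, ← Function.iterate_add_apply,
          ← Function.iterate_add_apply, add_comm]
    · refine mapsTo_span (f := (Q : K →ₗ[ℂ] K).restrictScalars ℝ) ?_
      rintro _ (ha | ⟨n, rfl⟩)
      · exact Set.mem_union_left _ (hE.1.2 ha)
      · exact Set.mem_union_right _ ⟨n + 1, Function.iterate_succ_apply' _ _ _⟩
  have hEs : E ≤ span ℝ s := fun e he => subset_span (Set.mem_union_left _ he)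
  have hxE : x ∈ E := hE.2 hs hEs (subset_span (Set.mem_union_right _ ⟨0, rfl⟩))
  exact inner_self_eq_zero.1 ((mem_orthogonal _ _).1 hx x (subset_span hxE))

section Reflection

attribute [local instance] InnerProductSpace.complexToReal

variable {E : Submodule ℝ K}

theorem IsInnerReal.I_smul_mem_orthogonal (hE : E.IsInnerReal) {e : K} (he : e ∈ E) :
    Complex.I • e ∈ Eᗮ :=
  (mem_orthogonal _ _).2 fun u hu => by
    change (⟪u, Complex.I • e⟫_ℂ).re = 0
    simp [hE u hu e he]

theorem IsInnerReal.I_smul_mem_of_mem_orthogonal (hE : E.IsInnerReal) [E.HasOrthogonalProjection]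
    (hspan : (span ℂ (E : Set K))ᗮ = ⊥) {z : K} (hz : z ∈ Eᗮ) : Complex.I • z ∈ E := by
  set w := Complex.I • z - E.starProjection (Complex.I • z)
  have hw : ∀ e ∈ E, ⟪e, w⟫_ℂ = 0 := fun e he => Complex.ext
    ((mem_orthogonal _ _).1 (sub_starProjection_mem_orthogonal _) e he)
    (by simp [w, hE e he _ (E.starProjection_apply_mem _),
      show (⟪e, z⟫_ℂ).re = 0 from (mem_orthogonal _ _).1 hz e he])
  have hw0 : w ∈ (span ℂ (E : Set K))ᗮ := by
    refine (mem_orthogonal _ _).2 fun u hu => inner_eq_zero_symm.1 ?_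
    refine mem_orthogonal_singleton_iff_inner_right.1
      ((span_le (p := (ℂ ∙ w)ᗮ)).2 (fun e he => ?_) hu)
    exact mem_orthogonal_singleton_iff_inner_right.2 (inner_eq_zero_symm.1 (hw e he))
  rw [hspan, mem_bot, sub_eq_zero] at hw0
  exact hw0 ▸ E.starProjection_apply_mem _

theorem reflection_add_of_mem_orthogonal [E.HasOrthogonalProjection] {a b : K} (ha : a ∈ E)
    (hb : b ∈ Eᗮ) : E.reflection (a + b) = a - b := by
  rw [map_add, reflection_mem_subspace_eq_self ha,
    reflection_mem_subspace_orthogonalComplement_eq_neg hb, sub_eq_add_neg]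

theorem IsInnerReal.reflection_I_smul (hE : E.IsInnerReal) [E.HasOrthogonalProjection]
    (hspan : (span ℂ (E : Set K))ᗮ = ⊥) (y : K) :
    E.reflection (Complex.I • y) = -(Complex.I • E.reflection y) := by
  obtain ⟨a, ha, b, hb, rfl⟩ := E.exists_add_mem_mem_orthogonal y
  rw [smul_add, add_comm,
    reflection_add_of_mem_orthogonal (hE.I_smul_mem_of_mem_orthogonal hspan hb)
      (hE.I_smul_mem_orthogonal ha),
    reflection_add_of_mem_orthogonal ha hb, smul_sub]
  abel

theorem reflection_map_comm {Q : K →L[ℂ] K} (hQ : (Q : K →ₗ[ℂ] K).IsSymmetric)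
    [E.HasOrthogonalProjection] (hQE : Set.MapsTo Q E E) (y : K) :
    E.reflection (Q y) = Q (E.reflection y) := by
  have hQperp : Set.MapsTo Q Eᗮ Eᗮ := fun z hz => (mem_orthogonal _ _).2 fun u hu => by
    change (⟪u, Q z⟫_ℂ).re = 0
    rw [← coe_coe, ← hQ]
    exact (mem_orthogonal _ _).1 hz _ (hQE hu)
  obtain ⟨a, ha, b, hb, rfl⟩ := E.exists_add_mem_mem_orthogonal y
  rw [map_add, reflection_add_of_mem_orthogonal (hQE ha) (hQperp hb),
    reflection_add_of_mem_orthogonal ha hb, map_sub]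

end Reflection

end Submodule

section ConjugateLinear

attribute [local instance] InnerProductSpace.complexToReal

variable {K K' : Type*} [NormedAddCommGroup K] [InnerProductSpace ℂ K]
  [NormedAddCommGroup K'] [InnerProductSpace ℂ K']

theorem LinearMap.map_smul_of_map_I_smul (f : K →ₗ[ℝ] K')
    (hf : ∀ y, f (Complex.I • y) = -(Complex.I • f y)) (c : ℂ) (y : K) :
    f (c • y) = (starRingEnd ℂ) c • f y := by
  have hc : c • y = c.re • y + c.im • (Complex.I • y) := by
    rw [← Complex.coe_smul, ← Complex.coe_smul, smul_smul, ← add_smul, Complex.re_add_im]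
  have hc' : (starRingEnd ℂ) c • f y = c.re • f y + c.im • -(Complex.I • f y) := by
    rw [← Complex.coe_smul, ← Complex.coe_smul, smul_neg, smul_smul, ← neg_smul, ← add_smul]
    congr 1
    apply Complex.ext <;> simp
  rw [hc, map_add, map_smul, map_smul, hf, hc']

theorem LinearIsometry.inner_map_map_of_map_I_smul (f : K →ₗᵢ[ℝ] K')
    (hf : ∀ y, f (Complex.I • y) = -(Complex.I • f y)) (a b : K) :
    ⟪f a, f b⟫_ℂ = ⟪b, a⟫_ℂ := by
  have hre (x y : K) : (⟪f x, f y⟫_ℂ).re = (⟪x, y⟫_ℂ).re := f.inner_map_map x y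
  apply Complex.ext
  · rw [hre, ← inner_conj_symm b a, Complex.conj_re]
  · have him (x y : K') : (⟪x, y⟫_ℂ).im = (⟪Complex.I • x, y⟫_ℂ).re := by
      simp
    rw [him, ← neg_neg (Complex.I • f a), ← hf, inner_neg_left, Complex.neg_re, hre,
      ← inner_conj_symm b a, Complex.conj_im]
    simp

theorem LinearMap.IsSymmetric.exists_conjugation_commute [CompleteSpace K] {Q : K →L[ℂ] K}
    (hQ : (Q : K →ₗ[ℂ] K).IsSymmetric) :
    ∃ J : K →L⋆[ℂ] K, (∀ a, J (J a) = a) ∧ (∀ a b, ⟪J a, J b⟫_ℂ = ⟪b, a⟫_ℂ) ∧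
      ∀ a, J (Q a) = Q (J a) := by
  obtain ⟨E, hE⟩ := Submodule.exists_maximal_isInnerReal_mapsTo Q
  have hspan := Submodule.orthogonal_span_eq_bot_of_maximal hQ hE
  have hclosed : E.topologicalClosure = E := le_antisymm
    (hE.2 ⟨hE.1.1.topologicalClosure, Submodule.mapsTo_topologicalClosure hE.1.2⟩
      E.le_topologicalClosure) E.le_topologicalClosure
  have : CompleteSpace E := (hclosed ▸ E.isClosed_topologicalClosure).completeSpace_coe
  have hI := hE.1.1.reflection_I_smul hspan
  refine ⟨{ toFun := E.reflection
            map_add' := map_add _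
            map_smul' := (E.reflection.toLinearEquiv.toLinearMap).map_smul_of_map_I_smul hI
            cont := E.reflection.continuous },
    E.reflection_reflection, (E.reflection.toLinearIsometry).inner_map_map_of_map_I_smul hI,
    E.reflection_map_comm hQ hE.1.2⟩

end ConjugateLinear

section ConjugationPair

variable {H K : Type*} [NormedAddCommGroup H] [InnerProductSpace ℂ H]
  [NormedAddCommGroup K] [InnerProductSpace ℂ K]

/-- A conjugation pair from `H` to `K` in the case `𝒞₁𝒞₂ = id_K`. -/
def IsConjugationPair (D₁ : H →ₗ⋆[ℂ] K) (D₂ : K →ₗ⋆[ℂ] H) : Prop :=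
  (∀ y, D₁ (D₂ y) = y) ∧ ∀ x y, ⟪D₁ x, y⟫_ℂ = ⟪D₂ y, x⟫_ℂ

theorem ContinuousLinearMap.exists_inner_conj_adjoint [CompleteSpace K] (D : K →L⋆[ℂ] H) :
    ∃ D' : H →ₗ⋆[ℂ] K, ∀ x y, ⟪D' x, y⟫_ℂ = ⟪D y, x⟫_ℂ := by
  have h (x : H) : ∃ k : K, ∀ y, ⟪k, y⟫_ℂ = ⟪D y, x⟫_ℂ :=
    ⟨(InnerProductSpace.toDual ℂ K).symm
      ((starL ℂ : ℂ ≃L⋆[ℂ] ℂ).toContinuousLinearMap ∘SL (innerSL ℂ x ∘SL D)),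
      fun y => by simp [InnerProductSpace.toDual_symm_apply]⟩
  choose D' hD' using h
  exact ⟨{ toFun := D'
           map_add' := fun x x' => ext_inner_right ℂ fun y => by
             simp [inner_add_left, hD']
           map_smul' := fun c x => ext_inner_right ℂ fun y => by
             simp [inner_smul_left, hD'] }, hD'⟩

theorem ContinuousLinearMap.exists_conjugation_pair_of_isometry [CompleteSpace H]
    [CompleteSpace K] (T : H →L[ℂ] K) (D : K →L⋆[ℂ] H) (hD : ∀ y y', ⟪D y, D y'⟫_ℂ = ⟪y', y⟫_ℂ)
    (hTD : ∀ y y', ⟪T (D y), y'⟫_ℂ = ⟪T (D y'), y⟫_ℂ) :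
    ∃ (D₁ : H →ₗ⋆[ℂ] K) (D₂ : K →ₗ⋆[ℂ] H), IsConjugationPair D₁ D₂ ∧
      ∀ y, T (D₂ y) = D₁ (adjoint T y) := by
  obtain ⟨D', hD'⟩ := D.exists_inner_conj_adjoint
  refine ⟨D', D, ⟨fun y => ext_inner_right ℂ fun v => ?_, hD'⟩,
    fun y => ext_inner_right ℂ fun v => ?_⟩
  · exact (hD' _ _).trans (hD v y)
  · rw [hD', adjoint_inner_right]
    exact hTD y v

end ConjugationPair

namespace ContinuousLinearMap

variable {H K : Type*} [NormedAddCommGroup H] [InnerProductSpace ℂ H] [CompleteSpace H]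
  [NormedAddCommGroup K] [InnerProductSpace ℂ K] [CompleteSpace K]

theorem exists_isSelfAdjoint_comp_self_eq (T : H →L[ℂ] K) :
    ∃ Q : K →L[ℂ] K, IsSelfAdjoint Q ∧ Q ∘L Q = T ∘L adjoint T :=
  ⟨CFC.sqrt _, .of_nonneg (CFC.sqrt_nonneg _),
    CFC.sqrt_mul_sqrt_self _ ((nonneg_iff_isPositive _).2 (isPositive_self_comp_adjoint T))⟩

theorem inner_adjoint_apply_adjoint_apply {T : H →L[ℂ] K} {Q : K →L[ℂ] K}
    (hQ : IsSelfAdjoint Q) (hQQ : Q ∘L Q = T ∘L adjoint T) (a b : K) :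
    ⟪adjoint T a, adjoint T b⟫_ℂ = ⟪Q a, Q b⟫_ℂ := by
  rw [adjoint_inner_left, ← comp_apply, ← hQQ, comp_apply]
  exact (hQ.isSymmetric a (Q b)).symm

theorem adjoint_apply_eq_zero_iff {T : H →L[ℂ] K} {Q : K →L[ℂ] K}
    (hQ : IsSelfAdjoint Q) (hQQ : Q ∘L Q = T ∘L adjoint T) (y : K) :
    adjoint T y = 0 ↔ Q y = 0 := by
  rw [← inner_self_eq_zero (𝕜 := ℂ), inner_adjoint_apply_adjoint_apply hQ hQQ, inner_self_eq_zero]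

theorem IsSelfAdjoint.denseRange_add_starProjection_ker {Q : K →L[ℂ] K} (hQ : IsSelfAdjoint Q) :
    DenseRange (Q + (LinearMap.ker (Q : K →ₗ[ℂ] K)).starProjection) := by
  set N := LinearMap.ker (Q : K →ₗ[ℂ] K)
  set e : K →ₗ[ℂ] K := Q + N.starProjection
  have hQs : ∀ x y, ⟪Q x, y⟫_ℂ = ⟪x, Q y⟫_ℂ := hQ.isSymmetric
  suffices (LinearMap.range e)ᗮ = ⊥ by
    change Dense (Set.range e)
    rw [← LinearMap.coe_range, Submodule.dense_iff_topologicalClosure_eq_top,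
      Submodule.topologicalClosure_eq_top_iff]
    exact this
  refine (Submodule.eq_bot_iff _).2 fun z hz => ?_
  have he (x : K) : ⟪Q x + N.starProjection x, z⟫_ℂ = 0 :=
    (Submodule.mem_orthogonal _ _).1 hz _ ⟨x, rfl⟩
  have hzN : z ∈ Nᗮ := (Submodule.mem_orthogonal _ _).2 fun n hn => by
    have hQn : Q n = 0 := hn
    simpa [hQn, Submodule.starProjection_eq_self_iff.2 hn] using he n
  have hz : z ∈ N := by
    change Q z = 0
    rw [← inner_self_eq_zero (𝕜 := ℂ), ← hQs]
    simpa [inner_add_left, Submodule.inner_right_of_mem_orthogonal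
      (N.starProjection_apply_mem (Q z)) hzN] using he (Q z)
  exact inner_self_eq_zero.1 (Submodule.inner_right_of_mem_orthogonal hz hzN)

theorem exists_isometry_inner_comp_symm (T : H →L[ℂ] K) (V : K →L⋆[ℂ] H)
    (hV : ∀ n n', adjoint T n = 0 → adjoint T n' = 0 → ⟪V n, V n'⟫_ℂ = ⟪n', n⟫_ℂ)
    (hTV : ∀ n, adjoint T n = 0 → T (V n) = 0) :
    ∃ D : K →L⋆[ℂ] H, (∀ y y', ⟪D y, D y'⟫_ℂ = ⟪y', y⟫_ℂ) ∧
      ∀ y y', ⟪T (D y), y'⟫_ℂ = ⟪T (D y'), y⟫_ℂ := by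
  obtain ⟨Q, hQ, hQQ⟩ := T.exists_isSelfAdjoint_comp_self_eq
  obtain ⟨J, hJJ, hJ, hJQ⟩ := hQ.isSymmetric.exists_conjugation_commute
  have hQs : ∀ x y, ⟪Q x, y⟫_ℂ = ⟪x, Q y⟫_ℂ := hQ.isSymmetric
  have hJs (a b : K) : ⟪J a, b⟫_ℂ = ⟪J b, a⟫_ℂ := by rw [← hJ, hJJ]
  set π := (LinearMap.ker (Q : K →ₗ[ℂ] K)).starProjection
  have hQπ (y : K) : Q (π y) = 0 := LinearMap.mem_ker.1 (Submodule.starProjection_apply_mem _ y)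
  have hπ (y : K) : adjoint T (π y) = 0 := (adjoint_apply_eq_zero_iff hQ hQQ _).2 (hQπ y)
  -- On `(ker Q)ᗮ` the extension `D` below is `W J`, for the polar decomposition `T* = W Q`.
  set e : K →L[ℂ] K := Q + π
  set f : K →SL[starRingEnd ℂ] H := adjoint T ∘SL J + V ∘SL π
  have hf (a b : K) : ⟪f a, f b⟫_ℂ = ⟪e b, e a⟫_ℂ := by
    have h₁ : ⟪adjoint T (J a), V (π b)⟫_ℂ = 0 := by
      rw [adjoint_inner_left, hTV _ (hπ b), inner_zero_right]
    have h₂ : ⟪V (π a), adjoint T (J b)⟫_ℂ = 0 := by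
      rw [adjoint_inner_right, hTV _ (hπ a), inner_zero_left]
    have h₃ : ⟪Q b, π a⟫_ℂ = 0 := by rw [hQs, hQπ, inner_zero_right]
    have h₄ : ⟪π b, Q a⟫_ℂ = 0 := by rw [← hQs, hQπ, inner_zero_left]
    simp only [e, f, add_apply, comp_apply, inner_add_left, inner_add_right, h₁, h₂, h₃, h₄,
      inner_adjoint_apply_adjoint_apply hQ hQQ, ← hJQ, hJ, hV _ _ (hπ a) (hπ b)]
  have hfe (a : K) : ‖f a‖ = ‖e a‖ := by
    have h := hf a a
    rw [inner_self_eq_norm_sq_to_K, inner_self_eq_norm_sq_to_K] at h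
    exact (pow_left_inj₀ (norm_nonneg _) (norm_nonneg _) two_ne_zero).1 (mod_cast h)
  have hDe (a : K) :
      (f : K →ₛₗ[starRingEnd ℂ] H).extendOfNorm (e : K →ₗ[ℂ] K) (e a) = f a :=
    LinearMap.extendOfNorm_eq hQ.denseRange_add_starProjection_ker
      ⟨1, fun x => (one_mul ‖e x‖).symm ▸ (hfe x).le⟩ a
  have hTf (a b : K) : ⟪T (f a), e b⟫_ℂ = ⟪J (Q a), Q (Q b)⟫_ℂ := by
    simp only [e, f, add_apply, comp_apply, map_add, hTV _ (hπ a), add_zero,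
      ← adjoint_inner_right, hπ b, inner_adjoint_apply_adjoint_apply hQ hQQ, hJQ]
  refine ⟨(f : K →ₛₗ[starRingEnd ℂ] H).extendOfNorm (e : K →ₗ[ℂ] K),
    hQ.denseRange_add_starProjection_ker.induction_on₂ ?_ fun a b => ?_,
    hQ.denseRange_add_starProjection_ker.induction_on₂ ?_ fun a b => ?_⟩
  · exact isClosed_eq (by fun_prop) (by fun_prop)
  · rw [hDe, hDe, hf]
  · exact isClosed_eq (by fun_prop) (by fun_prop)
  · rw [hDe, hDe, hTf, hTf, hJs, hJQ, hQs]

end ContinuousLinearMap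

namespace LinearPMap

variable {E F : Type*} [AddCommGroup E] [AddCommGroup F]

theorem eq_toPMap_of_mem_graph_iff {R : Type*} [Ring R] [Module R E] [Module R F]
    {T : E →ₗ.[R] F} {f : E →ₗ[R] F} (h : ∀ x z, (x, z) ∈ T.graph ↔ f x = z) : T = f.toPMap ⊤ := by
  have hdom : T.domain = ⊤ := eq_top_iff.2 fun x _ => mem_domain_of_mem_graph ((h x (f x)).2 rfl)
  refine LinearPMap.ext (by rw [hdom, LinearMap.toPMap_domain]) fun x hx _ => ?_
  exact ((h x _).1 (T.mem_graph ⟨x, hx⟩)).symm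

theorem isClosed_of_mem_graph_iff {R : Type*} [CommRing R] [Module R E] [Module R F]
    [TopologicalSpace E] [TopologicalSpace F] [T2Space F] {T : E →ₗ.[R] F} {f : E →L[R] F}
    (h : ∀ x z, (x, z) ∈ T.graph ↔ f x = z) : T.IsClosed := by
  have hgraph : (T.graph : Set (E × F)) = {p | f p.1 = p.2} := Set.ext fun p => h p.1 p.2
  rw [LinearPMap.IsClosed, hgraph]
  exact isClosed_eq (by fun_prop) continuous_snd

end LinearPMap

theorem ContinuousLinearMap.isUnit_one_sub_comp_adjoint {H K : Type*} [NormedAddCommGroup H]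
    [InnerProductSpace ℂ H] [CompleteSpace H] [NormedAddCommGroup K] [InnerProductSpace ℂ K]
    [CompleteSpace K] (A : K →L[ℂ] H) (hA : ‖A‖ < 1) : IsUnit (1 - A ∘L adjoint A) := by
  have h := norm_adjoint_comp_self (adjoint A)
  rw [adjoint_adjoint, LinearIsometryEquiv.norm_map] at h
  exact (Units.oneSub _ (h ▸ mul_lt_one_of_nonneg_of_lt_one_left (norm_nonneg A) hA hA.le)).isUnit

/-- Let `A : K →L H` be a complex symmetric contraction (`‖A‖ < 1`,
`(C₁,C₂)`-symmetric for some conjugation pair).  Then `T = (I − A*A)^{−1/2}A*`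
(with graph `{(x, z) : ∃ y, (I − AA*)^{1/2} y = x ∧ z = A* y}`) is a closed densely-defined
complex symmetric operator from `H` to `K`: there is a conjugation pair `(𝒞₁, 𝒞₂)` from `H`
to `K` (with `𝒞₁𝒞₂ = id_K`) such that `T𝒞₂ = 𝒞₁T*` as an equality of partial maps. -/
theorem T_complex_symmetric
    {H K : Type*} [NormedAddCommGroup H] [InnerProductSpace ℂ H] [CompleteSpace H]
    [NormedAddCommGroup K] [InnerProductSpace ℂ K] [CompleteSpace K]
    (C₁ : K →L⋆[ℂ] H) (C₂ : H →L⋆[ℂ] K)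
    (hC : ∀ y : K, C₂ (C₁ y) = y)
    (hpair : ∀ (y : K) (x : H), ⟪C₁ y, x⟫_ℂ = ⟪C₂ x, y⟫_ℂ)
    (A : K →L[ℂ] H) (hA : ‖A‖ < 1)
    (hsym : ∀ y : K, adjoint A (C₁ y) = C₂ (A y))
    (P : H →L[ℂ] H) (hP : P.IsPositive) (hP2 : P ∘L P = 1 - A ∘L adjoint A)
    (T : H →ₗ.[ℂ] K)
    (hT : ∀ (x : H) (z : K), (x, z) ∈ T.graph ↔ ∃ y : H, P y = x ∧ z = adjoint A y) :
    Dense (T.domain : Set H) ∧ T.IsClosed ∧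
    ∃ (D₁ : H →ₗ⋆[ℂ] K) (D₂ : K →ₗ⋆[ℂ] H),
      (∀ y : K, D₁ (D₂ y) = y) ∧
      (∀ (x : H) (y : K), ⟪D₁ x, y⟫_ℂ = ⟪D₂ y, x⟫_ℂ) ∧
      (∀ y : K,
        ((D₂ y ∈ T.domain) ↔ y ∈ T.adjoint.domain) ∧
        ∀ (h2 : D₂ y ∈ T.domain) (h1 : y ∈ T.adjoint.domain),
          T ⟨D₂ y, h2⟩ = D₁ (T.adjoint ⟨y, h1⟩)) := by
  obtain ⟨hPu, -⟩ := (Commute.refl P).isUnit_mul_iff.1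
    (mul_def P P ▸ hP2 ▸ A.isUnit_one_sub_comp_adjoint hA)
  set T₀ : H →L[ℂ] K := adjoint A ∘L Ring.inverse P
  have hT₀P (y : H) : T₀ (P y) = adjoint A y := by
    simpa [T₀] using congr(adjoint A ($(Ring.inverse_mul_cancel _ hPu) y))
  have hPT₀ (x : H) : P (Ring.inverse P x) = x := by
    simpa using congr($(Ring.mul_inverse_cancel _ hPu) x)
  have hgraph (x : H) (z : K) : (x, z) ∈ T.graph ↔ T₀ x = z := by
    rw [hT]
    exact ⟨fun ⟨y, hy, hz⟩ => hy ▸ hz ▸ hT₀P y, fun hz => ⟨_, hPT₀ x, hz.symm⟩⟩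
  obtain rfl := LinearPMap.eq_toPMap_of_mem_graph_iff hgraph
  have hker (n : K) (hn : adjoint T₀ n = 0) : A n = 0 := by
    have h := adjoint_inner_right T₀ (P (A n)) n
    rw [hn, inner_zero_right, hT₀P, adjoint_inner_left, eq_comm, inner_self_eq_zero] at h
    exact h
  have hV (n n' : K) (hn' : A n' = 0) : ⟪P (C₁ n), P (C₁ n')⟫_ℂ = ⟪n', n⟫_ℂ := by
    have hPs : ∀ u w, ⟪P u, w⟫_ℂ = ⟪u, P w⟫_ℂ := hP.isSelfAdjoint.isSymmetric
    have hPP (v : H) : P (P v) = v - A (adjoint A v) := by simpa using congr($hP2 v)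
    rw [hPs, hPP, inner_sub_right, hsym, hn', map_zero, map_zero, inner_zero_right, sub_zero,
      hpair, hC]
  obtain ⟨D, hD, hTD⟩ := T₀.exists_isometry_inner_comp_symm (P ∘SL C₁)
    (fun n n' _ hn' => hV n n' (hker n' hn')) (fun n hn => by simp [hT₀P, hsym, hker n hn])
  obtain ⟨D₁, D₂, ⟨h₁, h₂⟩, hT₀D⟩ := T₀.exists_conjugation_pair_of_isometry D hD hTD
  refine ⟨by simp, LinearPMap.isClosed_of_mem_graph_iff hgraph, D₁, D₂, h₁, h₂, fun y => ?_⟩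
  rw [T₀.toPMap_adjoint_eq_adjoint_toPMap_of_dense (by simp)]
  exact ⟨by simp, fun _ _ => hT₀D y⟩
end

section
/- Let H, K be infinite-dimensional separable complex Hilbert spaces. Then the set CSO_b of bounded complex symmetric operators from H to K is dense in B(H,K) in the strong-* topology; consequently it is also dense in the strong operator topology and the weak operator topology. -/
/-! The approximation is exact on finitely many vectors: with `M = span {xᵢ, T* yⱼ}` and `P_M` the
orthogonal projection onto `M`, the finite-rank operator `T' = T P_M` satisfies `T' xᵢ = T xᵢ` and
`T'* yⱼ = P_M T* yⱼ = T* yⱼ`. A singular value decomposition `T' = ∑ₖ sₖ ⟪eₖ, ·⟫ fₖ` turns `T'`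
into a complex symmetric operator: as `H` and `K` are separable and infinite-dimensional, the
finite orthonormal families `(eₖ)` and `(fₖ)` extend to Hilbert bases indexed by the same set
`κ ⊕ ℕ`, and the antiunitary `C` conjugating coordinates with respect to these bases maps `eₖ` to
`fₖ`, whence `C⁻¹ T' = T'* C` with `(C, C⁻¹)` a conjugation pair. -/

open scoped InnerProductSpace

/-- A bounded operator `T : H →L K` is complex symmetric if there is a conjugation pair
`(C₁, C₂)` from `H` to `K` (conjugate-linear `C₁ : H → K`, `C₂ : K → H` with
`⟪C₁x, y⟫ = ⟪C₂y, x⟫` and `C₂C₁ = id_H` or `C₁C₂ = id_K`) with `C₂T = T*C₁`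
(respectively `TC₂ = C₁T*`). -/
def ContinuousLinearMap.IsComplexSymmetric
    {H K : Type*} [NormedAddCommGroup H] [InnerProductSpace ℂ H] [CompleteSpace H]
    [NormedAddCommGroup K] [InnerProductSpace ℂ K] [CompleteSpace K]
    (T : H →L[ℂ] K) : Prop :=
  ∃ (C₁ : H →ₗ⋆[ℂ] K) (C₂ : K →ₗ⋆[ℂ] H),
    (∀ (x : H) (y : K), ⟪C₁ x, y⟫_ℂ = ⟪C₂ y, x⟫_ℂ) ∧
    (((∀ x : H, C₂ (C₁ x) = x) ∧
        ∀ x : H, C₂ (T x) = ContinuousLinearMap.adjoint T (C₁ x)) ∨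
      ((∀ y : K, C₁ (C₂ y) = y) ∧
        ∀ y : K, T (C₂ y) = C₁ (ContinuousLinearMap.adjoint T y)))

open scoped ComplexConjugate

open ContinuousLinearMap

section Antiunitary

variable {E F : Type*} [NormedAddCommGroup E] [InnerProductSpace ℂ E]
  [NormedAddCommGroup F] [InnerProductSpace ℂ F]

theorem LinearIsometry.inner_map_map_antilinear (f : E →ₗᵢ⋆[ℂ] F) (x y : E) :
    ⟪f x, f y⟫_ℂ = ⟪y, x⟫_ℂ := by
  have hre : ∀ u v : E, (⟪f u, f v⟫_ℂ).re = (⟪u, v⟫_ℂ).re := fun u v => by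
    simp only [← RCLike.re_to_complex,
      re_inner_eq_norm_add_mul_self_sub_norm_sub_mul_self_div_four, ← map_add, ← map_sub,
      f.norm_map]
  rw [show ⟪y, x⟫_ℂ = conj ⟪x, y⟫_ℂ from (inner_conj_symm _ _).symm]
  apply Complex.ext
  · rw [hre, Complex.conj_re]
  -- the imaginary part is the real part at `(x, I • y)`, and `f (I • y) = -I • f y`
  · have h := hre x (Complex.I • y)
    simp only [map_smulₛₗ, inner_smul_right, Complex.conj_I, neg_mul, Complex.neg_re,
      Complex.mul_re, Complex.I_re, Complex.I_im, zero_mul, one_mul, zero_sub] at h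
    rw [Complex.conj_im]
    linarith

theorem LinearIsometryEquiv.inner_map_eq_flip_antilinear (f : E ≃ₗᵢ⋆[ℂ] F) (x : E) (y : F) :
    ⟪f x, y⟫_ℂ = ⟪f.symm y, x⟫_ℂ := by
  conv_lhs => rw [← f.apply_symm_apply y]
  exact f.toLinearIsometry.inner_map_map_antilinear x (f.symm y)

theorem ContinuousLinearMap.isComplexSymmetric_of_antiunitary [CompleteSpace E] [CompleteSpace F]
    {T : E →L[ℂ] F} (C : E ≃ₗᵢ⋆[ℂ] F) (hC : ∀ x, C.symm (T x) = adjoint T (C x)) :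
    T.IsComplexSymmetric :=
  ⟨C.toLinearEquiv.toLinearMap, C.symm.toLinearEquiv.toLinearMap, C.inner_map_eq_flip_antilinear,
    Or.inl ⟨C.symm_apply_apply, hC⟩⟩

end Antiunitary

section RCLike

variable {𝕜 E F : Type*} [RCLike 𝕜] [NormedAddCommGroup E] [InnerProductSpace 𝕜 E]
  [NormedAddCommGroup F] [InnerProductSpace 𝕜 F]

theorem Orthonormal.countable [TopologicalSpace.SeparableSpace E] {ι : Type*} {v : ι → E}
    (hv : Orthonormal 𝕜 v) : Countable ι := by
  refine Pairwise.countable_of_isOpen_disjoint (s := fun i => Metric.ball (v i) 2⁻¹)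
    (fun i j hij => Metric.ball_disjoint_ball ?_) (fun _ => Metric.isOpen_ball)
    (fun _ => Metric.nonempty_ball.2 (by norm_num))
  have h := @norm_sub_sq 𝕜 E _ _ _ (v i) (v j)
  rw [hv.inner_eq_zero hij, hv.norm_eq_one, hv.norm_eq_one] at h
  rw [dist_eq_norm]
  norm_num at h
  nlinarith [norm_nonneg (v i - v j)]

theorem HilbertBasis.infinite {ι : Type*} (b : HilbertBasis ι 𝕜 E)
    (hE : ¬ FiniteDimensional 𝕜 E) : Infinite ι := by
  by_contra hfin
  have : Fintype ι := @Fintype.ofFinite ι (not_infinite_iff_finite.mp hfin)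
  exact hE b.toOrthonormalBasis.toBasis.finiteDimensional_of_finite

theorem Orthonormal.exists_hilbertBasis_sum_nat [CompleteSpace E]
    [TopologicalSpace.SeparableSpace E] (hE : ¬ FiniteDimensional 𝕜 E) {κ : Type*} [Finite κ]
    {e : κ → E} (he : Orthonormal 𝕜 e) :
    ∃ b : HilbertBasis (κ ⊕ ℕ) 𝕜 E, ∀ k, b (Sum.inl k) = e k := by
  classical
  obtain ⟨w, b, hew, hb⟩ := he.toSubtypeRange.exists_hilbertBasis_extension
  have : Countable w := b.orthonormal.countable
  have : Infinite w := b.infinite hE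
  have : Countable ↥(w \ Set.range e) :=
    ((Set.to_countable w).mono Set.sdiff_subset).to_subtype
  have : Infinite ↥(w \ Set.range e) :=
    ((Set.infinite_coe_iff.mp ‹_›).sdiff (Set.finite_range e)).to_subtype
  let σ : κ ⊕ ℕ ≃ w :=
    (Equiv.sumCongr (Equiv.ofInjective e he.linearIndependent.injective)
      (nonempty_denumerable ↥(w \ Set.range e)).some.eqv.symm).trans
      (Equiv.Set.sumDiffSubset hew)
  refine ⟨HilbertBasis.mk (b.orthonormal.comp σ σ.injective) ?_, fun k => ?_⟩
  · rw [Set.range_comp, σ.range_eq_univ, Set.image_univ, b.dense_span]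
  · simp [σ, hb]

noncomputable def HilbertBasis.conjEquiv {ι : Type*} (b : HilbertBasis ι 𝕜 E)
    (b' : HilbertBasis ι 𝕜 F) : E ≃ₗᵢ⋆[𝕜] F :=
  (b.repr.trans (starₗᵢ 𝕜)).trans b'.repr.symm

theorem HilbertBasis.conjEquiv_apply_self {ι : Type*} (b : HilbertBasis ι 𝕜 E)
    (b' : HilbertBasis ι 𝕜 F) (i : ι) : b.conjEquiv b' (b i) = b' i := by
  classical
  have hstar : star (lp.single (E := fun _ : ι => 𝕜) 2 i 1) = lp.single 2 i 1 := by
    ext j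
    by_cases h : j = i <;> simp [lp.star_apply, lp.single_apply, h]
  simp [HilbertBasis.conjEquiv, ← HilbertBasis.repr_symm_single, hstar]

theorem exists_antiunitary_apply_orthonormal [CompleteSpace E]
    [TopologicalSpace.SeparableSpace E] [CompleteSpace F] [TopologicalSpace.SeparableSpace F]
    (hE : ¬ FiniteDimensional 𝕜 E) (hF : ¬ FiniteDimensional 𝕜 F) {κ : Type*} [Finite κ]
    {e : κ → E} {f : κ → F} (he : Orthonormal 𝕜 e) (hf : Orthonormal 𝕜 f) :
    ∃ C : E ≃ₗᵢ⋆[𝕜] F, ∀ k, C (e k) = f k := by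
  obtain ⟨b, hb⟩ := he.exists_hilbertBasis_sum_nat hE
  obtain ⟨b', hb'⟩ := hf.exists_hilbertBasis_sum_nat hF
  exact ⟨b.conjEquiv b', fun k => by rw [← hb, ← hb', b.conjEquiv_apply_self]⟩

theorem ContinuousLinearMap.exists_singularValueDecomposition [FiniteDimensional 𝕜 E]
    [CompleteSpace F] (A : E →L[𝕜] F) :
    ∃ (κ : Type) (_ : Fintype κ) (e : κ → E) (f : κ → F) (s : κ → ℝ),
      Orthonormal 𝕜 e ∧ Orthonormal 𝕜 f ∧ ∀ x, A x = ∑ k, ((s k : 𝕜) * ⟪e k, x⟫_𝕜) • f k := by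
  classical
  have : CompleteSpace E := FiniteDimensional.complete 𝕜 E
  have hS : ((adjoint A ∘L A : E →L[𝕜] E) : E →ₗ[𝕜] E).IsSymmetric := fun u v => by
    simp [adjoint_inner_left, adjoint_inner_right]
  set b := hS.eigenvectorBasis rfl
  have horth : ∀ i j, i ≠ j → ⟪A (b i), A (b j)⟫_𝕜 = 0 := fun i j hij => by
    rw [← adjoint_inner_right, ← comp_apply, ← coe_coe, hS.apply_eigenvectorBasis,
      inner_smul_right, b.orthonormal.inner_eq_zero hij, mul_zero]
  refine ⟨{i // A (b i) ≠ 0}, inferInstance, fun k => b k, fun k => (‖A (b k)‖⁻¹ : 𝕜) • A (b k),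
    fun k => ‖A (b k)‖, b.orthonormal.comp _ Subtype.val_injective,
    ⟨fun k => norm_smul_inv_norm k.2, fun k l hkl => ?_⟩, fun x => ?_⟩
  · simp [inner_smul_left, inner_smul_right, horth k l (Subtype.val_injective.ne hkl)]
  · conv_lhs => rw [← b.sum_repr' x, map_sum]
    rw [← Fintype.sum_subtype_add_sum_subtype (fun i => A (b i) ≠ 0), add_eq_left.mpr
      (Finset.sum_eq_zero fun i _ => by simp [not_not.mp i.2])]
    refine Finset.sum_congr rfl fun k _ => ?_
    have hk : (‖A (b k)‖ : 𝕜) ≠ 0 := by simpa using k.2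
    simp only [map_smul, smul_smul]
    field_simp

end RCLike

section ComplexSymmetric

variable {H K : Type*} [NormedAddCommGroup H] [InnerProductSpace ℂ H] [CompleteSpace H]
  [TopologicalSpace.SeparableSpace H] [NormedAddCommGroup K] [InnerProductSpace ℂ K]
  [CompleteSpace K] [TopologicalSpace.SeparableSpace K]

theorem ContinuousLinearMap.isComplexSymmetric_of_eq_sum (hH : ¬ FiniteDimensional ℂ H)
    (hK : ¬ FiniteDimensional ℂ K) {κ : Type*} [Fintype κ] {e : κ → H} {f : κ → K}
    (he : Orthonormal ℂ e) (hf : Orthonormal ℂ f) (s : κ → ℝ) {T : H →L[ℂ] K}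
    (hT : ∀ x, T x = ∑ k, ((s k : ℂ) * ⟪e k, x⟫_ℂ) • f k) : T.IsComplexSymmetric := by
  obtain ⟨C, hC⟩ := exists_antiunitary_apply_orthonormal hH hK he hf
  refine isComplexSymmetric_of_antiunitary C fun x => ext_inner_left ℂ fun z => ?_
  have hCe : ∀ k, ⟪f k, C x⟫_ℂ = ⟪x, e k⟫_ℂ := fun k => by
    rw [← hC]; exact C.toLinearIsometry.inner_map_map_antilinear (e k) x
  rw [adjoint_inner_right, hT, hT, map_sum, inner_sum, sum_inner]
  refine Finset.sum_congr rfl fun k _ => ?_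
  simp only [map_smulₛₗ, C.symm_apply_eq.mpr (hC k).symm, inner_smul_left, inner_smul_right, hCe,
    map_mul, Complex.conj_ofReal, inner_conj_symm]
  ring

theorem ContinuousLinearMap.isComplexSymmetric_comp_starProjection (hH : ¬ FiniteDimensional ℂ H)
    (hK : ¬ FiniteDimensional ℂ K) (T : H →L[ℂ] K) (M : Submodule ℂ H) [FiniteDimensional ℂ M] :
    (T ∘L M.starProjection).IsComplexSymmetric := by
  obtain ⟨κ, _, e, f, s, he, hf, hA⟩ := (T ∘L M.subtypeL).exists_singularValueDecomposition
  refine isComplexSymmetric_of_eq_sum hH hK (he.comp_linearIsometry M.subtypeₗᵢ) hf s fun x => ?_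
  simpa using hA (M.orthogonalProjectionOnto x)

theorem ContinuousLinearMap.exists_isComplexSymmetric_eqOn (hH : ¬ FiniteDimensional ℂ H)
    (hK : ¬ FiniteDimensional ℂ K) (T : H →L[ℂ] K) {s : Set H} {t : Set K} (hs : s.Finite)
    (ht : t.Finite) :
    ∃ T' : H →L[ℂ] K, T'.IsComplexSymmetric ∧ Set.EqOn T' T s ∧
      Set.EqOn (adjoint T') (adjoint T) t := by
  set M := Submodule.span ℂ (s ∪ adjoint T '' t)
  have : FiniteDimensional ℂ M := FiniteDimensional.span_of_finite ℂ (hs.union (ht.image _))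
  refine ⟨T ∘L M.starProjection, T.isComplexSymmetric_comp_starProjection hH hK M,
    fun x hx => ?_, fun y hy => ?_⟩
  · simp [M.starProjection_eq_self_iff.mpr (Submodule.subset_span (Or.inl hx))]
  · simp [adjoint_comp, (isSelfAdjoint_starProjection M).adjoint_eq,
      M.starProjection_eq_self_iff.mpr (Submodule.subset_span (Or.inr ⟨y, hy, rfl⟩))]

end ComplexSymmetric

/-- For infinite-dimensional separable complex Hilbert spaces `H, K`, the set
of bounded complex symmetric operators is dense in `B(H,K)` in the strong-* topology (every
basic strong-* neighborhood of any `T` meets it); consequently it is also dense in the strong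
operator topology and in the weak operator topology. -/
theorem cso_bounded_dense_strong_star
    {H K : Type*} [NormedAddCommGroup H] [InnerProductSpace ℂ H] [CompleteSpace H]
    [TopologicalSpace.SeparableSpace H]
    [NormedAddCommGroup K] [InnerProductSpace ℂ K] [CompleteSpace K]
    [TopologicalSpace.SeparableSpace K]
    (hH : ¬ FiniteDimensional ℂ H) (hK : ¬ FiniteDimensional ℂ K) :
    (∀ (T : H →L[ℂ] K) (ε : ℝ), 0 < ε → ∀ (n : ℕ) (x : Fin n → H) (y : Fin n → K),
      ∃ T' : H →L[ℂ] K, T'.IsComplexSymmetric ∧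
        (∀ i, ‖T' (x i) - T (x i)‖ < ε) ∧
        (∀ i, ‖ContinuousLinearMap.adjoint T' (y i) -
            ContinuousLinearMap.adjoint T (y i)‖ < ε)) ∧
    (∀ (T : H →L[ℂ] K) (ε : ℝ), 0 < ε → ∀ (n : ℕ) (x : Fin n → H),
      ∃ T' : H →L[ℂ] K, T'.IsComplexSymmetric ∧
        ∀ i, ‖T' (x i) - T (x i)‖ < ε) ∧
    (∀ (T : H →L[ℂ] K) (ε : ℝ), 0 < ε → ∀ (n : ℕ) (x : Fin n → H) (y : Fin n → K),
      ∃ T' : H →L[ℂ] K, T'.IsComplexSymmetric ∧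
        ∀ i, ‖(⟪T' (x i) - T (x i), y i⟫_ℂ : ℂ)‖ < ε) := by
  refine ⟨fun T ε hε n x y => ?_, fun T ε hε n x => ?_, fun T ε hε n x _ => ?_⟩
  · obtain ⟨T', hT', hx, hy⟩ :=
      T.exists_isComplexSymmetric_eqOn hH hK (Set.finite_range x) (Set.finite_range y)
    exact ⟨T', hT', fun i => by simp [hx ⟨i, rfl⟩, hε], fun i => by simp [hy ⟨i, rfl⟩, hε]⟩
  all_goals
    obtain ⟨T', hT', hx, -⟩ :=
      T.exists_isComplexSymmetric_eqOn hH hK (Set.finite_range x) Set.finite_empty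
    exact ⟨T', hT', fun i => by simp [hx ⟨i, rfl⟩, hε]⟩
end
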